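/- arXiv:1405.3029 — 6 statements merged into one kernel-verified Lean document; each statement's English description precedes it below -/
import Mathlib

section
/- Assume E|Y|^δ < ∞ for some δ ∈ (0, 1) and θ₀ = (μ₀, φ₀, σ₀², b₀²) ∈ Θ. Then E[ sup_{θ∈Θ} |ℓ(θ)| ] < ∞, i.e. the random variable ω ↦ sup_{θ∈Θ} |ℓ(θ)(ω)| is integrable. -/
open MeasureTheory ProbabilityTheory

noncomputable section

/-- The Gaussian quasi-log-likelihood
`ℓ(θ) = -(1/2)[log(s(1+βY²)) + (Z-μ-φY)²/(s(1+βY²))]` for `θ = (μ, φ, s, β)`. -/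
def qll {Ω : Type*} (Y Z : Ω → ℝ) (θ : ℝ × ℝ × ℝ × ℝ) (ω : Ω) : ℝ :=
  -(1 / 2) * (Real.log (θ.2.2.1 * (1 + θ.2.2.2 * Y ω ^ 2)) +
    (Z ω - θ.1 - θ.2.1 * Y ω) ^ 2 / (θ.2.2.1 * (1 + θ.2.2.2 * Y ω ^ 2)))

/-- The parameter space `Θ = {(μ,φ,s,β) : |μ| ≤ μ̄, |φ| ≤ φ̄, ω̲ ≤ s ≤ ω̄, α̲ ≤ β ≤ ᾱ}`. -/
def Theta (μb φb ωl ωu αl αu : ℝ) : Set (ℝ × ℝ × ℝ × ℝ) :=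
  {θ | |θ.1| ≤ μb ∧ |θ.2.1| ≤ φb ∧ ωl ≤ θ.2.2.1 ∧ θ.2.2.1 ≤ ωu ∧
    αl ≤ θ.2.2.2 ∧ θ.2.2.2 ≤ αu}

private lemma rpow_one_add_le' {t a : ℝ} (ht : 0 ≤ t) (ha0 : 0 ≤ a) (ha1 : a ≤ 1) :
    (1 + t) ^ a ≤ 1 + t ^ a := by
  have h := NNReal.rpow_add_le_add_rpow (1 : NNReal) t.toNNReal ha0 ha1
  have h2 := NNReal.coe_le_coe.2 h
  simpa [NNReal.coe_rpow, Real.coe_toNNReal _ ht] using h2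

private lemma sq_add_four_le {a b c d : ℝ} : (a+b+c+d)^2 ≤ 4*(a^2+b^2+c^2+d^2) := by
  nlinarith [sq_nonneg (a-b), sq_nonneg (a-c), sq_nonneg (a-d), sq_nonneg (b-c),
    sq_nonneg (b-d), sq_nonneg (c-d)]

set_option maxHeartbeats 1000000 in
private lemma qll_abs_bound {μ φ s β μ₀ φ₀ b₀ y e e' μb φb ωl ωu αl αu δ : ℝ}
    (hμ : |μ| ≤ μb) (hφ : |φ| ≤ φb) (hs1 : ωl ≤ s) (hs2 : s ≤ ωu)
    (hβ1 : αl ≤ β) (hβ2 : β ≤ αu) (hμ₀ : |μ₀| ≤ μb) (hφ₀ : |φ₀| ≤ φb)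
    (hωl : 0 < ωl) (hαl : 0 < αl) (hδ : 0 < δ) (hδ1 : δ < 1) :
    |(-(1/2) * (Real.log (s*(1+β*y^2)) +
        (μ₀+φ₀*y+b₀*y*e'+e - μ - φ*y)^2 / (s*(1+β*y^2))))| ≤
      ((|Real.log ωl| + |Real.log ωu|)/2 + (2/ωl)*(4*μb^2+4*φb^2/αl))
        + (1/δ)*αu^(δ/2)*(|y|^δ) + (2/ωl)*e^2 + (2*b₀^2/(ωl*αl))*e'^2 := by
  have hy2 : (0:ℝ) ≤ y^2 := sq_nonneg y
  have hβ0 : (0:ℝ) < β := lt_of_lt_of_le hαl hβ1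
  have h1β : (0:ℝ) < 1 + β*y^2 := by nlinarith
  have hspos : (0:ℝ) < s := lt_of_lt_of_le hωl hs1
  have hdpos : (0:ℝ) < s*(1+β*y^2) := mul_pos hspos h1β
  have hd'pos : (0:ℝ) < ωl*(1+αl*y^2) := by positivity
  have hyδ : (0:ℝ) ≤ |y|^δ := Real.rpow_nonneg (abs_nonneg y) δ
  -- log part
  have hlog1 : |Real.log s| ≤ |Real.log ωl| + |Real.log ωu| := by
    have l1 : Real.log ωl ≤ Real.log s := Real.log_le_log hωl hs1
    have l2 : Real.log s ≤ Real.log ωu := Real.log_le_log hspos hs2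
    have := neg_abs_le (Real.log ωl)
    have := le_abs_self (Real.log ωu)
    have := abs_nonneg (Real.log ωl)
    have := abs_nonneg (Real.log ωu)
    rw [abs_le]; constructor <;> linarith
  have hlog2 : Real.log (1+β*y^2) ≤ (2/δ)*(αu^(δ/2)*(|y|^δ)) := by
    have e1 : Real.log (1+β*y^2) = (2/δ) * Real.log ((1+β*y^2)^(δ/2)) := by
      rw [Real.log_rpow h1β]; field_simp
    have e2 : Real.log ((1+β*y^2)^(δ/2)) ≤ (1+β*y^2)^(δ/2) - 1 :=
      Real.log_le_sub_one_of_pos (Real.rpow_pos_of_pos h1β _)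
    have e3 : (1+β*y^2)^(δ/2) ≤ 1 + (β*y^2)^(δ/2) :=
      rpow_one_add_le' (by positivity) (by positivity) (by linarith)
    have e4 : (β*y^2)^(δ/2) = β^(δ/2)*((y^2)^(δ/2)) := Real.mul_rpow hβ0.le hy2
    have e5 : (y^2)^(δ/2) = |y|^δ := by
      rw [← sq_abs, ← Real.rpow_natCast |y| 2, ← Real.rpow_mul (abs_nonneg y)]
      congr 1; ring
    have e6 : β^(δ/2) ≤ αu^(δ/2) := Real.rpow_le_rpow hβ0.le hβ2 (by positivity)
    have e7 : β^(δ/2)*(|y|^δ) ≤ αu^(δ/2)*(|y|^δ) := mul_le_mul_of_nonneg_right e6 hyδ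
    have e8 : Real.log ((1+β*y^2)^(δ/2)) ≤ αu^(δ/2)*(|y|^δ) := by
      rw [e4, e5] at e3; linarith
    rw [e1]
    exact mul_le_mul_of_nonneg_left e8 (by positivity)
  have hlognn : 0 ≤ Real.log (1+β*y^2) := Real.log_nonneg (by nlinarith)
  have hA : |Real.log (s*(1+β*y^2))| ≤
      |Real.log ωl| + |Real.log ωu| + (2/δ)*(αu^(δ/2)*(|y|^δ)) := by
    rw [Real.log_mul hspos.ne' h1β.ne']
    calc |Real.log s + Real.log (1+β*y^2)| ≤ |Real.log s| + |Real.log (1+β*y^2)| :=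
          abs_add_le _ _
      _ = |Real.log s| + Real.log (1+β*y^2) := by rw [abs_of_nonneg hlognn]
      _ ≤ _ := by linarith
  -- quadratic part
  set n := (μ₀+φ₀*y+b₀*y*e'+e - μ - φ*y)^2 with hn
  have hnn : 0 ≤ n := sq_nonneg _
  have ha2 : (μ₀-μ)^2 ≤ 4*μb^2 := by
    have h1 : |μ₀ - μ| ≤ 2*μb := by
      calc |μ₀ - μ| ≤ |μ₀| + |μ| := abs_sub μ₀ μ
        _ ≤ 2*μb := by linarith
    have h3 := pow_le_pow_left₀ (abs_nonneg (μ₀-μ)) h1 2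
    rw [sq_abs] at h3
    have : (2*μb)^2 = 4*μb^2 := by ring
    linarith
  have hb2 : (φ₀-φ)^2 ≤ 4*φb^2 := by
    have h1 : |φ₀ - φ| ≤ 2*φb := by
      calc |φ₀ - φ| ≤ |φ₀| + |φ| := abs_sub φ₀ φ
        _ ≤ 2*φb := by linarith
    have h3 := pow_le_pow_left₀ (abs_nonneg (φ₀-φ)) h1 2
    rw [sq_abs] at h3
    have : (2*φb)^2 = 4*φb^2 := by ring
    linarith
  have hn4 : n ≤ 16*μb^2 + 16*φb^2*y^2 + 4*b₀^2*y^2*e'^2 + 4*e^2 := by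
    have hb2' : (φ₀-φ)^2*y^2 ≤ 4*φb^2*y^2 := mul_le_mul_of_nonneg_right hb2 hy2
    have hk := sq_add_four_le (a := μ₀-μ) (b := (φ₀-φ)*y) (c := b₀*y*e') (d := e)
    have hnrw : n = ((μ₀-μ)+(φ₀-φ)*y+b₀*y*e'+e)^2 := by rw [hn]; ring
    have h1 : ((φ₀-φ)*y)^2 = (φ₀-φ)^2*y^2 := by ring
    have h2 : (b₀*y*e')^2 = b₀^2*y^2*e'^2 := by ring
    rw [hnrw]
    rw [h1, h2] at hk
    linarith
  have hd' : ωl*(1+αl*y^2) ≤ s*(1+β*y^2) := by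
    have p1 : 0 ≤ (s-ωl)*(1+αl*y^2) := mul_nonneg (by linarith) (by positivity)
    have p2 : 0 ≤ s*((β-αl)*y^2) := mul_nonneg hspos.le (mul_nonneg (by linarith) hy2)
    nlinarith
  have hdd : n/(s*(1+β*y^2)) ≤ n/(ωl*(1+αl*y^2)) :=
    div_le_div_of_nonneg_left hnn hd'pos hd'
  have hsplit : n/(ωl*(1+αl*y^2)) ≤
      16*μb^2/ωl + 16*φb^2/(ωl*αl) + (4*b₀^2/(ωl*αl))*e'^2 + (4/ωl)*e^2 := by
    have hmono : n/(ωl*(1+αl*y^2)) ≤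
        (16*μb^2 + 16*φb^2*y^2 + 4*b₀^2*y^2*e'^2 + 4*e^2)/(ωl*(1+αl*y^2)) :=
      (div_le_div_iff_of_pos_right hd'pos).mpr hn4

    have hωd : ωl ≤ ωl*(1+αl*y^2) := by
      have hexp : ωl*(1+αl*y^2) = ωl + ωl*(αl*y^2) := by ring
      have hp := mul_nonneg hωl.le (mul_nonneg hαl.le hy2)
      linarith
    have t1 : 16*μb^2/(ωl*(1+αl*y^2)) ≤ 16*μb^2/ωl :=
      div_le_div_of_nonneg_left (by positivity) hωl hωd
    have t2 : 16*φb^2*y^2/(ωl*(1+αl*y^2)) ≤ 16*φb^2/(ωl*αl) := by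
      rw [div_le_div_iff₀ hd'pos (by positivity)]
      have hexp : 16*φb^2*(ωl*(1+αl*y^2)) = 16*(φb^2*ωl) + 16*φb^2*y^2*(ωl*αl) := by ring
      have hp := mul_nonneg (sq_nonneg φb) hωl.le
      linarith
    have t3 : 4*b₀^2*y^2*e'^2/(ωl*(1+αl*y^2)) ≤ (4*b₀^2/(ωl*αl))*e'^2 := by
      have : (4*b₀^2/(ωl*αl))*e'^2 = 4*b₀^2*e'^2/(ωl*αl) := by ring
      rw [this, div_le_div_iff₀ hd'pos (by positivity)]
      have hexp : 4*b₀^2*e'^2*(ωl*(1+αl*y^2)) =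
          4*(b₀^2*e'^2*ωl) + 4*b₀^2*y^2*e'^2*(ωl*αl) := by ring
      have hp := mul_nonneg (mul_nonneg (sq_nonneg b₀) (sq_nonneg e')) hωl.le
      linarith
    have t4 : 4*e^2/(ωl*(1+αl*y^2)) ≤ (4/ωl)*e^2 := by
      have : (4/ωl)*e^2 = 4*e^2/ωl := by ring
      rw [this]
      exact div_le_div_of_nonneg_left (by positivity) hωl hωd
    have hadd : (16*μb^2 + 16*φb^2*y^2 + 4*b₀^2*y^2*e'^2 + 4*e^2)/(ωl*(1+αl*y^2)) =
        16*μb^2/(ωl*(1+αl*y^2)) + 16*φb^2*y^2/(ωl*(1+αl*y^2)) +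
        4*b₀^2*y^2*e'^2/(ωl*(1+αl*y^2)) + 4*e^2/(ωl*(1+αl*y^2)) := by ring
    rw [hadd] at hmono
    linarith
  have hB : n/(s*(1+β*y^2)) ≤
      16*μb^2/ωl + 16*φb^2/(ωl*αl) + (4*b₀^2/(ωl*αl))*e'^2 + (4/ωl)*e^2 :=
    le_trans hdd hsplit
  have hBnn : 0 ≤ n/(s*(1+β*y^2)) := div_nonneg hnn hdpos.le
  have habs : |(-(1/2) * (Real.log (s*(1+β*y^2)) + n / (s*(1+β*y^2))))| ≤
      (1/2) * (|Real.log (s*(1+β*y^2))| + n / (s*(1+β*y^2))) := by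
    rw [abs_mul]
    have : |(-(1/2) : ℝ)| = 1/2 := by norm_num
    rw [this]
    apply mul_le_mul_of_nonneg_left _ (by norm_num)
    calc |Real.log (s*(1+β*y^2)) + n / (s*(1+β*y^2))| ≤
        |Real.log (s*(1+β*y^2))| + |n / (s*(1+β*y^2))| := abs_add_le _ _
      _ = |Real.log (s*(1+β*y^2))| + n / (s*(1+β*y^2)) := by rw [abs_of_nonneg hBnn]
  calc |(-(1/2) * (Real.log (s*(1+β*y^2)) + n / (s*(1+β*y^2))))| ≤
      (1/2) * (|Real.log (s*(1+β*y^2))| + n / (s*(1+β*y^2))) := habs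
    _ ≤ _ := by
      have r1 : 2/δ*(αu^(δ/2)*(|y|^δ)) = 2*(1/δ*αu^(δ/2)*(|y|^δ)) := by ring
      have r2 : 16*μb^2/ωl + 16*φb^2/(ωl*αl) = 2*(2/ωl*(4*μb^2+4*φb^2/αl)) := by ring
      have r3 : 4*b₀^2/(ωl*αl)*e'^2 = 2*(2*b₀^2/(ωl*αl)*e'^2) := by ring
      have r4 : 4/ωl*e^2 = 2*(2/ωl*e^2) := by ring
      linarith

private lemma ciSup_eq_ciSup_dense {X : Type*} [TopologicalSpace X] [Nonempty X] {D : Set X}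
    (hD : Dense D) {f : X → ℝ} (hf : Continuous f) {M : ℝ} (hM : ∀ x, f x ≤ M) :
    (⨆ x, f x) = ⨆ d : D, f d := by
  haveI : Nonempty D := (hD.nonempty).to_subtype
  have bddX : BddAbove (Set.range f) := ⟨M, by rintro _ ⟨x, rfl⟩; exact hM x⟩
  have bddD : BddAbove (Set.range fun d : D => f d) := ⟨M, by rintro _ ⟨d, rfl⟩; exact hM d⟩
  apply le_antisymm
  · refine ciSup_le fun x => ?_
    have hsub : D ⊆ {y | f y ≤ ⨆ d : D, f d} := fun d hd => le_ciSup bddD ⟨d, hd⟩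
    have hc : IsClosed {y | f y ≤ ⨆ d : D, f d} := isClosed_le hf continuous_const
    exact (hc.closure_subset_iff.mpr hsub) (hD x)
  · exact ciSup_le fun d => le_ciSup bddX d.1

set_option maxHeartbeats 1000000

/-- the envelope `ω ↦ sup_{θ ∈ Θ} |ℓ(θ)(ω)|` is integrable. -/
theorem qll_envelope_integrable
    {Ω : Type*} [MeasurableSpace Ω] (P : Measure Ω) [IsProbabilityMeasure P]
    (Y ε ε' : Ω → ℝ)
    (hYm : Measurable Y) (hε : Measurable ε) (hε' : Measurable ε')
    (hindep : iIndepFun ![Y, ε, ε'] P)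
    (μ₀ φ₀ b₀ σ₀sq : ℝ)
    (hεint : Integrable ε P) (hεmean : ∫ ω, ε ω ∂P = 0)
    (hε'int : Integrable ε' P) (hε'mean : ∫ ω, ε' ω ∂P = 0)
    (hεsq : Integrable (fun ω => ε ω ^ 2) P) (hεvar : ∫ ω, ε ω ^ 2 ∂P = σ₀sq)
    (hε'sq : Integrable (fun ω => ε' ω ^ 2) P) (hε'var : ∫ ω, ε' ω ^ 2 ∂P = σ₀sq)
    (hσ : 0 < σ₀sq)
    (μb φb ωl ωu αl αu : ℝ)
    (hμb : 0 < μb) (hφb : 0 < φb) (hωl : 0 < ωl) (hωu : ωl ≤ ωu)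
    (hαl : 0 < αl) (hαu : αl ≤ αu)
    (hθ₀ : (μ₀, φ₀, σ₀sq, b₀ ^ 2) ∈ Theta μb φb ωl ωu αl αu)
    (δ : ℝ) (hδ : 0 < δ) (hδ1 : δ < 1)
    (hYδ : Integrable (fun ω => |Y ω| ^ δ) P) :
    Integrable (fun ω => ⨆ θ : Theta μb φb ωl ωu αl αu,
      |qll Y (fun ω => μ₀ + φ₀ * Y ω + b₀ * Y ω * ε' ω + ε ω) θ.1 ω|) P := by
  obtain ⟨h01, h02, h03, h04, h05, h06⟩ := hθ₀
  set S := Theta μb φb ωl ωu αl αu with hS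
  set Z : Ω → ℝ := fun ω => μ₀ + φ₀ * Y ω + b₀ * Y ω * ε' ω + ε ω with hZdef
  set g : Ω → ℝ := fun ω =>
    ((|Real.log ωl| + |Real.log ωu|)/2 + (2/ωl)*(4*μb^2+4*φb^2/αl))
      + (1/δ)*αu^(δ/2)*(|Y ω|^δ) + (2/ωl)*(ε ω)^2 + (2*b₀^2/(ωl*αl))*(ε' ω)^2 with hgdef
  have hg_int : Integrable g P := by
    refine Integrable.add (Integrable.add (Integrable.add (integrable_const _) ?_) ?_) ?_
    · exact hYδ.const_mul _
    · exact hεsq.const_mul _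
    · exact hε'sq.const_mul _
  have hbd : ∀ (θ : S) (ω : Ω), |qll Y Z θ.1 ω| ≤ g ω := by
    rintro ⟨⟨μ, φ, s, β⟩, hmem⟩ ω
    obtain ⟨hμ, hφ, hs1', hs2', hβ1', hβ2'⟩ := hmem
    have h := qll_abs_bound (y := Y ω) (e := ε ω) (e' := ε' ω) (b₀ := b₀) (ωu := ωu)
      hμ hφ hs1' hs2' hβ1' hβ2' h01 h02 hωl hαl hδ hδ1
    simpa only [qll, hZdef, hgdef] using h
  haveI : Nonempty ↥S := ⟨⟨_, ⟨h01, h02, h03, h04, h05, h06⟩⟩⟩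
  have hcont : ∀ ω, Continuous fun θ : ↥S => |qll Y Z θ.1 ω| := by
    intro ω
    have hden : Continuous fun θ : ↥S => θ.1.2.2.1 * (1 + θ.1.2.2.2 * Y ω ^ 2) := by
      fun_prop
    have hnum : Continuous fun θ : ↥S => Z ω - θ.1.1 - θ.1.2.1 * Y ω := by fun_prop
    have hne : ∀ θ : ↥S, θ.1.2.2.1 * (1 + θ.1.2.2.2 * Y ω ^ 2) ≠ 0 := by
      intro θ
      obtain ⟨_, _, h3, _, h5, _⟩ := θ.2
      have hβ0 : (0:ℝ) < θ.1.2.2.2 := lt_of_lt_of_le hαl h5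
      have : (0:ℝ) < θ.1.2.2.1 * (1 + θ.1.2.2.2 * Y ω ^ 2) := by
        apply mul_pos (lt_of_lt_of_le hωl h3)
        nlinarith [sq_nonneg (Y ω)]
      exact this.ne'
    show Continuous fun θ : ↥S => |(-(1/2) * (Real.log (θ.1.2.2.1 * (1 + θ.1.2.2.2 * Y ω ^ 2)) +
      (Z ω - θ.1.1 - θ.1.2.1 * Y ω) ^ 2 / (θ.1.2.2.1 * (1 + θ.1.2.2.2 * Y ω ^ 2))))|
    rw [continuous_iff_continuousAt]
    intro θ
    have h1 : ContinuousAt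
        (fun θ : ↥S => Real.log (θ.1.2.2.1 * (1 + θ.1.2.2.2 * Y ω ^ 2))) θ :=
      hden.continuousAt.log (hne θ)
    have h2 : ContinuousAt (fun θ : ↥S =>
        (Z ω - θ.1.1 - θ.1.2.1 * Y ω) ^ 2 / (θ.1.2.2.1 * (1 + θ.1.2.2.2 * Y ω ^ 2))) θ :=
      ContinuousAt.div (hnum.continuousAt.pow 2) hden.continuousAt (hne θ)
    exact (ContinuousAt.mul continuousAt_const (h1.add h2)).abs
  -- measurability in ω
  have hZm : Measurable Z :=
    ((measurable_const.add (hYm.const_mul φ₀)).add ((hYm.const_mul b₀).mul hε')).add hε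
  have hqm : ∀ c : ℝ × ℝ × ℝ × ℝ, Measurable fun ω => |qll Y Z c ω| := by
    intro c
    have hden : Measurable fun ω => c.2.2.1 * (1 + c.2.2.2 * Y ω ^ 2) :=
      (measurable_const.add ((hYm.pow_const 2).const_mul c.2.2.2)).const_mul c.2.2.1
    have h1 : Measurable fun ω => Real.log (c.2.2.1 * (1 + c.2.2.2 * Y ω ^ 2)) :=
      Real.measurable_log.comp hden
    have h2 : Measurable fun ω =>
        (Z ω - c.1 - c.2.1 * Y ω) ^ 2 / (c.2.2.1 * (1 + c.2.2.2 * Y ω ^ 2)) :=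
      (((hZm.sub measurable_const).sub (hYm.const_mul c.2.1)).pow_const 2).div hden
    exact ((h1.add h2).const_mul _).abs
  obtain ⟨D, hDc, hDd⟩ := TopologicalSpace.exists_countable_dense ↥S
  haveI := hDc.to_subtype
  have hrw : (fun ω => ⨆ θ : ↥S, |qll Y Z θ.1 ω|)
      = fun ω => ⨆ d : ↥D, |qll Y Z ((d : ↥S)).1 ω| :=
    funext fun ω => ciSup_eq_ciSup_dense hDd (hcont ω) (fun θ => hbd θ ω)
  have hmeas : Measurable fun ω => ⨆ θ : ↥S, |qll Y Z θ.1 ω| := by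
    rw [hrw]
    exact Measurable.iSup fun d => hqm _
  refine Integrable.mono' hg_int hmeas.aestronglyMeasurable ?_
  filter_upwards with ω
  have bdd : BddAbove (Set.range fun θ : ↥S => |qll Y Z θ.1 ω|) :=
    ⟨g ω, by rintro _ ⟨θ, rfl⟩; exact hbd θ ω⟩
  have hsupnn : 0 ≤ ⨆ θ : ↥S, |qll Y Z θ.1 ω| :=
    le_trans (abs_nonneg _) (le_ciSup bdd ⟨_, ⟨h01, h02, h03, h04, h05, h06⟩⟩)
  rw [Real.norm_eq_abs, abs_of_nonneg hsupnn]
  exact ciSup_le fun θ => hbd θ ω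
end
end

section
/- Assume θ₀ = (μ₀, φ₀, σ₀², b₀²) ∈ Θ. Then E[ sup_{θ∈Θ} (Z − μ − φ Y)²/(s(1 + β Y²)) ] ≤ (4/ω̲) ( ω̄ + 4μ̄² + 4φ̄²/α̲ + ω̄ ᾱ/α̲ ); in particular this supremum is integrable. -/
open MeasureTheory ProbabilityTheory

noncomputable section

set_option maxHeartbeats 2000000 in
/-- the envelope `sup_{θ∈Θ} (Z-μ-φY)²/(s(1+βY²))` is integrable with
`E[sup] ≤ (4/ω̲)(ω̄ + 4μ̄² + 4φ̄²/α̲ + ω̄ᾱ/α̲)`. -/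
theorem qll_quadratic_envelope_bound
    {Ω : Type*} [MeasurableSpace Ω] (P : Measure Ω) [IsProbabilityMeasure P]
    (Y ε ε' : Ω → ℝ)
    (hYm : Measurable Y) (hε : Measurable ε) (hε' : Measurable ε')
    (hindep : iIndepFun ![Y, ε, ε'] P)
    (μ₀ φ₀ b₀ σ₀sq : ℝ)
    (hεint : Integrable ε P) (hεmean : ∫ ω, ε ω ∂P = 0)
    (hε'int : Integrable ε' P) (hε'mean : ∫ ω, ε' ω ∂P = 0)
    (hεsq : Integrable (fun ω => ε ω ^ 2) P) (hεvar : ∫ ω, ε ω ^ 2 ∂P = σ₀sq)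
    (hε'sq : Integrable (fun ω => ε' ω ^ 2) P) (hε'var : ∫ ω, ε' ω ^ 2 ∂P = σ₀sq)
    (hσ : 0 < σ₀sq)
    (μb φb ωl ωu αl αu : ℝ)
    (hμb : 0 < μb) (hφb : 0 < φb) (hωl : 0 < ωl) (hωu : ωl ≤ ωu)
    (hαl : 0 < αl) (hαu : αl ≤ αu)
    (hθ₀ : (μ₀, φ₀, σ₀sq, b₀ ^ 2) ∈ Theta μb φb ωl ωu αl αu) :
    Integrable (fun ω => ⨆ θ : Theta μb φb ωl ωu αl αu,
      ((μ₀ + φ₀ * Y ω + b₀ * Y ω * ε' ω + ε ω) - θ.1.1 - θ.1.2.1 * Y ω) ^ 2 /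
        (θ.1.2.2.1 * (1 + θ.1.2.2.2 * Y ω ^ 2))) P ∧
    ∫ ω, (⨆ θ : Theta μb φb ωl ωu αl αu,
      ((μ₀ + φ₀ * Y ω + b₀ * Y ω * ε' ω + ε ω) - θ.1.1 - θ.1.2.1 * Y ω) ^ 2 /
        (θ.1.2.2.1 * (1 + θ.1.2.2.2 * Y ω ^ 2))) ∂P ≤
      (4 / ωl) * (ωu + 4 * μb ^ 2 + 4 * φb ^ 2 / αl + ωu * αu / αl) := by
  obtain ⟨hμ0, hφ0, hσl, hσu, hbl, hbu⟩ := hθ₀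
  replace hμ0 : |μ₀| ≤ μb := hμ0
  replace hφ0 : |φ₀| ≤ φb := hφ0
  replace hσl : ωl ≤ σ₀sq := hσl
  replace hσu : σ₀sq ≤ ωu := hσu
  replace hbl : αl ≤ b₀ ^ 2 := hbl
  replace hbu : b₀ ^ 2 ≤ αu := hbu
  have hαu0 : 0 < αu := lt_of_lt_of_le hαl hαu
  have hθ₀' : (μ₀, φ₀, σ₀sq, b₀ ^ 2) ∈ Theta μb φb ωl ωu αl αu :=
    ⟨hμ0, hφ0, hσl, hσu, hbl, hbu⟩
  set Z : Ω → ℝ := fun ω => μ₀ + φ₀ * Y ω + b₀ * Y ω * ε' ω + ε ω with hZdef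
  have hZrw : ∀ ω, μ₀ + φ₀ * Y ω + b₀ * Y ω * ε' ω + ε ω = Z ω := fun _ => rfl
  simp only [hZrw]
  set F : Ω → ℝ := fun ω => (|Z ω| + μb + φb * |Y ω|) ^ 2 / (ωl * (1 + αl * Y ω ^ 2)) with hFdef
  set g : Ω → ℝ := fun ω =>
    (4 / ωl) * (ε ω ^ 2 + (4 * μb ^ 2 + 4 * φb ^ 2 / αl) + (αu / αl) * ε' ω ^ 2) with hgdef
  haveI : Nonempty (Theta μb φb ωl ωu αl αu) :=
    ⟨⟨(μ₀, φ₀, σ₀sq, b₀ ^ 2), hθ₀'⟩⟩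
  have hdenl : ∀ ω : Ω, 0 < ωl * (1 + αl * Y ω ^ 2) := fun ω => by positivity
  -- each term is bounded by F
  have hub : ∀ ω, ∀ θ : Theta μb φb ωl ωu αl αu,
      (Z ω - θ.1.1 - θ.1.2.1 * Y ω) ^ 2 / (θ.1.2.2.1 * (1 + θ.1.2.2.2 * Y ω ^ 2)) ≤ F ω := by
    rintro ω ⟨⟨μ, φ, s, β⟩, hμ, hφ, hs1, hs2, hb1, hb2⟩
    simp only
    replace hμ : |μ| ≤ μb := hμ
    replace hφ : |φ| ≤ φb := hφ
    replace hs1 : ωl ≤ s := hs1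
    replace hs2 : s ≤ ωu := hs2
    replace hb1 : αl ≤ β := hb1
    replace hb2 : β ≤ αu := hb2
    have hd1 : ωl * (1 + αl * Y ω ^ 2) ≤ s * (1 + β * Y ω ^ 2) := by
      have hsb : ωl * αl ≤ s * β := mul_le_mul hs1 hb1 hαl.le (le_trans hωl.le hs1)
      nlinarith [mul_nonneg (sub_nonneg.2 hsb) (sq_nonneg (Y ω))]
    have h1 : |Z ω - μ - φ * Y ω| ≤ |Z ω| + μb + φb * |Y ω| := by
      have t1 := abs_sub (Z ω - μ) (φ * Y ω)
      have t2 := abs_sub (Z ω) μ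
      have t3 : |φ * Y ω| ≤ φb * |Y ω| := by
        rw [abs_mul]; exact mul_le_mul_of_nonneg_right hφ (abs_nonneg _)
      linarith
    have hnum : (Z ω - μ - φ * Y ω) ^ 2 ≤ (|Z ω| + μb + φb * |Y ω|) ^ 2 := by
      rw [← sq_abs (Z ω - μ - φ * Y ω)]
      exact pow_le_pow_left₀ (abs_nonneg _) h1 2
    exact div_le_div₀ (by positivity) hnum (hdenl ω) hd1
  have hbdd : ∀ ω, BddAbove (Set.range fun θ : Theta μb φb ωl ωu αl αu =>
      (Z ω - θ.1.1 - θ.1.2.1 * Y ω) ^ 2 / (θ.1.2.2.1 * (1 + θ.1.2.2.2 * Y ω ^ 2))) :=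
    fun ω => ⟨F ω, by rintro _ ⟨θ, rfl⟩; exact hub ω θ⟩
  -- the sup equals F
  have hsup : ∀ ω, (⨆ θ : Theta μb φb ωl ωu αl αu,
      (Z ω - θ.1.1 - θ.1.2.1 * Y ω) ^ 2 / (θ.1.2.2.1 * (1 + θ.1.2.2.2 * Y ω ^ 2))) = F ω := by
    intro ω
    refine le_antisymm (ciSup_le (hub ω)) ?_
    set μs : ℝ := if 0 ≤ Z ω then -μb else μb with hμs
    set φs : ℝ := if 0 ≤ Z ω then (if 0 ≤ Y ω then -φb else φb)
      else (if 0 ≤ Y ω then φb else -φb) with hφs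
    have hmem : (μs, φs, ωl, αl) ∈ Theta μb φb ωl ωu αl αu := by
      refine ⟨?_, ?_, le_refl _, hωu, le_refl _, hαu⟩
      · rw [hμs]; split <;> simp [abs_of_pos hμb, abs_of_pos hμb, hμb.le]
      · rw [hφs]; split <;> split <;> simp [abs_of_pos hφb, hφb.le]
    have hval : (Z ω - μs - φs * Y ω) ^ 2 = (|Z ω| + μb + φb * |Y ω|) ^ 2 := by
      rw [hμs, hφs]
      rcases le_or_gt 0 (Z ω) with hz | hz <;> rcases le_or_gt 0 (Y ω) with hy | hy
      · rw [if_pos hz, if_pos hz, if_pos hy, abs_of_nonneg hz, abs_of_nonneg hy]; ring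
      · rw [if_pos hz, if_pos hz, if_neg hy.not_ge, abs_of_nonneg hz, abs_of_neg hy]; ring
      · rw [if_neg hz.not_ge, if_neg hz.not_ge, if_pos hy, abs_of_neg hz, abs_of_nonneg hy]; ring
      · rw [if_neg hz.not_ge, if_neg hz.not_ge, if_neg hy.not_ge, abs_of_neg hz, abs_of_neg hy]
        ring
    have hle := le_ciSup (hbdd ω)
      (⟨(μs, φs, ωl, αl), hmem⟩ : {θ : ℝ × ℝ × ℝ × ℝ // θ ∈ Theta μb φb ωl ωu αl αu})
    calc F ω = (Z ω - μs - φs * Y ω) ^ 2 / (ωl * (1 + αl * Y ω ^ 2)) := by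
          rw [hFdef]; simp only; rw [hval]
      _ ≤ _ := hle
  have hFnonneg : ∀ ω, 0 ≤ F ω := fun ω => div_nonneg (by positivity) (hdenl ω).le
  -- F ≤ g pointwise
  have hFg : ∀ ω, F ω ≤ g ω := by
    intro ω
    rw [hFdef, hgdef]
    simp only
    rw [div_le_iff₀ (hdenl ω)]
    have hZb : |Z ω| ≤ μb + φb * |Y ω| + |b₀| * |Y ω| * |ε' ω| + |ε ω| := by
      have t1 := abs_add_le (μ₀ + φ₀ * Y ω + b₀ * Y ω * ε' ω) (ε ω)
      have t2 := abs_add_le (μ₀ + φ₀ * Y ω) (b₀ * Y ω * ε' ω)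
      have t3 := abs_add_le μ₀ (φ₀ * Y ω)
      have t4 : |φ₀ * Y ω| ≤ φb * |Y ω| := by
        rw [abs_mul]; exact mul_le_mul_of_nonneg_right hφ0 (abs_nonneg _)
      have t5 : |b₀ * Y ω * ε' ω| = |b₀| * |Y ω| * |ε' ω| := by rw [abs_mul, abs_mul]
      rw [hZdef]; simp only
      linarith
    have h2 : (|Z ω| + μb + φb * |Y ω|) ^ 2 ≤
        (|ε ω| + 2 * μb + 2 * φb * |Y ω| + |b₀| * |Y ω| * |ε' ω|) ^ 2 := by
      refine pow_le_pow_left₀ (by positivity) ?_ 2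
      linarith
    have key : ∀ w x y z : ℝ, (w + x + y + z) ^ 2 ≤ 4 * (w ^ 2 + x ^ 2 + y ^ 2 + z ^ 2) := by
      intro w x y z
      nlinarith [sq_nonneg (w - x), sq_nonneg (w - y), sq_nonneg (w - z), sq_nonneg (x - y),
        sq_nonneg (x - z), sq_nonneg (y - z)]
    have h3 : (|ε ω| + 2 * μb + 2 * φb * |Y ω| + |b₀| * |Y ω| * |ε' ω|) ^ 2 ≤
        4 * (ε ω ^ 2 + 4 * μb ^ 2 + 4 * φb ^ 2 * Y ω ^ 2 + b₀ ^ 2 * Y ω ^ 2 * ε' ω ^ 2) := by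
      have hk := key (|ε ω|) (2 * μb) (2 * φb * |Y ω|) (|b₀| * |Y ω| * |ε' ω|)
      have e1 : |ε ω| ^ 2 = ε ω ^ 2 := sq_abs _
      have e2 : (2 * μb) ^ 2 = 4 * μb ^ 2 := by ring
      have e3 : (2 * φb * |Y ω|) ^ 2 = 4 * φb ^ 2 * Y ω ^ 2 := by
        rw [mul_pow, mul_pow, sq_abs]; ring
      have e4 : (|b₀| * |Y ω| * |ε' ω|) ^ 2 = b₀ ^ 2 * Y ω ^ 2 * ε' ω ^ 2 := by
        rw [mul_pow, mul_pow, sq_abs, sq_abs, sq_abs]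
      rw [e1, e2, e3, e4] at hk
      linarith
    have h4 : 4 * (ε ω ^ 2 + 4 * μb ^ 2 + 4 * φb ^ 2 * Y ω ^ 2 + b₀ ^ 2 * Y ω ^ 2 * ε' ω ^ 2) ≤
        4 / ωl * (ε ω ^ 2 + (4 * μb ^ 2 + 4 * φb ^ 2 / αl) + αu / αl * ε' ω ^ 2) *
          (ωl * (1 + αl * Y ω ^ 2)) := by
      have hA : 4 / ωl * (ε ω ^ 2 + (4 * μb ^ 2 + 4 * φb ^ 2 / αl) + αu / αl * ε' ω ^ 2) *
          (ωl * (1 + αl * Y ω ^ 2)) =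
          4 * (ε ω ^ 2 + 4 * μb ^ 2 + 4 * φb ^ 2 / αl + αu / αl * ε' ω ^ 2) +
          (4 * ε ω ^ 2 * (αl * Y ω ^ 2) + 16 * μb ^ 2 * (αl * Y ω ^ 2) +
            16 * φb ^ 2 * Y ω ^ 2 + 4 * αu * Y ω ^ 2 * ε' ω ^ 2) := by
        field_simp
        ring
      have k4 : b₀ ^ 2 * Y ω ^ 2 * ε' ω ^ 2 ≤ αu * Y ω ^ 2 * ε' ω ^ 2 := by
        have : 0 ≤ (αu - b₀ ^ 2) * (Y ω ^ 2 * ε' ω ^ 2) :=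
          mul_nonneg (by linarith) (by positivity)
        nlinarith [this]
      have n1 : 0 ≤ 4 * ε ω ^ 2 * (αl * Y ω ^ 2) := by positivity
      have n2 : 0 ≤ 16 * μb ^ 2 * (αl * Y ω ^ 2) := by positivity
      have n3 : 0 ≤ 4 * φb ^ 2 / αl := by positivity
      have n4 : 0 ≤ αu / αl * ε' ω ^ 2 :=
        mul_nonneg (div_nonneg hαu0.le hαl.le) (sq_nonneg _)
      linarith
    linarith
  -- integrability of g and F
  have hgint : Integrable g P := by
    refine Integrable.const_mul ?_ _
    exact (hεsq.add (integrable_const _)).add (hε'sq.const_mul _)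
  have hFmeas : Measurable F := by
    rw [hFdef]
    fun_prop
  have hFint : Integrable F P := by
    refine hgint.mono' hFmeas.aestronglyMeasurable (ae_of_all _ fun ω => ?_)
    rw [Real.norm_eq_abs, abs_of_nonneg (hFnonneg ω)]
    exact hFg ω
  have hgi : ∫ ω, g ω ∂P =
      4 / ωl * (σ₀sq + (4 * μb ^ 2 + 4 * φb ^ 2 / αl) + αu / αl * σ₀sq) := by
    rw [hgdef]
    simp only
    have i1 : Integrable (fun ω => ε ω ^ 2 + (4 * μb ^ 2 + 4 * φb ^ 2 / αl)) P :=
      hεsq.add (integrable_const _)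
    have i2 : Integrable (fun ω => αu / αl * ε' ω ^ 2) P := hε'sq.const_mul _
    rw [integral_const_mul, integral_add i1 i2, integral_add hεsq (integrable_const _),
      integral_const_mul, hεvar, hε'var, integral_const]
    simp
  have hfun : (fun ω => ⨆ θ : Theta μb φb ωl ωu αl αu,
      (Z ω - θ.1.1 - θ.1.2.1 * Y ω) ^ 2 / (θ.1.2.2.1 * (1 + θ.1.2.2.2 * Y ω ^ 2))) = F :=
    funext hsup
  rw [hfun]
  constructor
  · exact hFint
  · have h5 : ∫ ω, F ω ∂P ≤ ∫ ω, g ω ∂P := integral_mono hFint hgint hFg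
    rw [hgi] at h5
    refine h5.trans ?_
    have hmul : (0:ℝ) ≤ 4 / ωl := by positivity
    refine mul_le_mul_of_nonneg_left ?_ hmul
    have k1 : αu / αl * σ₀sq ≤ αu / αl * ωu :=
      mul_le_mul_of_nonneg_left hσu (div_nonneg hαu0.le hαl.le)
    have k2 : ωu * αu / αl = αu / αl * ωu := by ring
    linarith
end
end

section
/- Assume E ε⁴ < ∞ and E ε′⁴ < ∞, and θ₀ = (μ₀, φ₀, σ₀², b₀²) ∈ Θ. Then both E[ sup_{θ∈Θ} ( Y (Z − μ − φ Y) / (s(1 + β Y²)) )² ] < ∞ and E[ sup_{θ∈Θ} ( (Y²/(2(1 + β Y²))) (1 − (Z − μ − φ Y)²/(s(1 + β Y²))) )² ] < ∞; that is, the partial derivatives of ℓ(θ) with respect to φ and with respect to β have square-integrable envelopes over Θ. -/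
open MeasureTheory ProbabilityTheory

noncomputable section

lemma aux_sup_dense {X : Type*} [TopologicalSpace X] [Nonempty X] {D : Set X}
    (hD : Dense D) {f : X → ℝ} (hf : Continuous f) (hb : BddAbove (Set.range f)) :
    ⨆ x, f x = ⨆ d : D, f d := by
  haveI : Nonempty D := hD.nonempty.to_subtype
  have hbD : BddAbove (Set.range fun d : D => f d) :=
    hb.mono (Set.range_comp_subset_range (Subtype.val : D → X) f)
  apply le_antisymm
  · refine ciSup_le fun x => ?_
    have h1 : f x ∈ closure (f '' D) :=
      image_closure_subset_closure_image hf (Set.mem_image_of_mem f (hD x))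
    have h2 : closure (f '' D) ⊆ Set.Iic (⨆ d : D, f d) := by
      refine closure_minimal ?_ isClosed_Iic
      rintro z ⟨d, hd, rfl⟩
      exact le_ciSup hbD (⟨d, hd⟩ : D)
    exact h2 h1
  · exact ciSup_le fun d => le_ciSup hb d.1

lemma aux_bd1 (y s β ωl αl : ℝ) (hωl : 0 < ωl) (hαl : 0 < αl) (hs : ωl ≤ s) (hβ : αl ≤ β) :
    |y| / (s * (1 + β * y ^ 2)) ≤ (αl + 1) / (αl * ωl) := by
  have hβ0 : 0 < β := hαl.trans_le hβ
  have h1p : (0:ℝ) ≤ 1 + β * y ^ 2 := by nlinarith [mul_nonneg hβ0.le (sq_nonneg y)]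
  have hd : 0 < s * (1 + β * y ^ 2) := by
    have : (0:ℝ) < 1 + β * y ^ 2 := by nlinarith [mul_nonneg hβ0.le (sq_nonneg y)]
    exact mul_pos (hωl.trans_le hs) this
  rw [div_le_div_iff₀ hd (by positivity)]
  nlinarith [sq_abs y, abs_nonneg y,
    mul_nonneg (mul_nonneg (by linarith : (0:ℝ) ≤ αl + 1) (sub_nonneg.2 hs)) h1p,
    mul_nonneg (mul_nonneg (mul_nonneg (by linarith : (0:ℝ) ≤ αl + 1) hωl.le)
      (sub_nonneg.2 hβ)) (sq_nonneg y),
    mul_nonneg (mul_nonneg hωl.le hαl.le) (sq_nonneg (|y| - 1)),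
    mul_nonneg (mul_nonneg hωl.le hαl.le) (sq_nonneg y), hωl.le,
    mul_nonneg hωl.le hαl.le,
    mul_nonneg (mul_nonneg (mul_nonneg hωl.le hαl.le) hαl.le) (sq_nonneg y)]

lemma aux_bd2 (y s β ωl αl : ℝ) (hωl : 0 < ωl) (hαl : 0 < αl) (hs : ωl ≤ s) (hβ : αl ≤ β) :
    y ^ 2 / (s * (1 + β * y ^ 2)) ≤ 1 / (αl * ωl) := by
  have hβ0 : 0 < β := hαl.trans_le hβ
  have h1p : (0:ℝ) ≤ 1 + β * y ^ 2 := by nlinarith [mul_nonneg hβ0.le (sq_nonneg y)]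
  have hd : 0 < s * (1 + β * y ^ 2) := by
    have : (0:ℝ) < 1 + β * y ^ 2 := by nlinarith [mul_nonneg hβ0.le (sq_nonneg y)]
    exact mul_pos (hωl.trans_le hs) this
  rw [div_le_div_iff₀ hd (by positivity)]
  nlinarith [mul_nonneg (sub_nonneg.2 hs) h1p,
    mul_nonneg (mul_nonneg hωl.le (sub_nonneg.2 hβ)) (sq_nonneg y), hωl.le]

lemma aux_bd3 (y s β ωl αl : ℝ) (hωl : 0 < ωl) (hαl : 0 < αl) (hs : ωl ≤ s) (hβ : αl ≤ β) :
    1 / (s * (1 + β * y ^ 2)) ≤ 1 / ωl := by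
  have hβ0 : 0 < β := hαl.trans_le hβ
  have h1p : (0:ℝ) ≤ 1 + β * y ^ 2 := by nlinarith [mul_nonneg hβ0.le (sq_nonneg y)]
  have hd : 0 < s * (1 + β * y ^ 2) := by
    have : (0:ℝ) < 1 + β * y ^ 2 := by nlinarith [mul_nonneg hβ0.le (sq_nonneg y)]
    exact mul_pos (hωl.trans_le hs) this
  rw [div_le_div_iff₀ hd hωl]
  nlinarith [mul_nonneg (sub_nonneg.2 hs) h1p,
    mul_nonneg hωl.le (mul_nonneg hβ0.le (sq_nonneg y))]

lemma aux_sq4 (a b c d : ℝ) : (a + b + c + d) ^ 2 ≤ 4 * (a ^ 2 + b ^ 2 + c ^ 2 + d ^ 2) := by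
  nlinarith [sq_nonneg (a - b), sq_nonneg (a - c), sq_nonneg (a - d), sq_nonneg (b - c),
    sq_nonneg (b - d), sq_nonneg (c - d)]

lemma aux_sq3 (a b : ℝ) : (1 + a ^ 2 + b ^ 2) ^ 2 ≤ 3 * (1 + a ^ 4 + b ^ 4) := by
  nlinarith [sq_nonneg (a ^ 2 - b ^ 2), sq_nonneg (1 - a ^ 2), sq_nonneg (1 - b ^ 2),
    sq_nonneg a, sq_nonneg b]

set_option maxHeartbeats 1000000 in
lemma env2_bound (y e e' μ₀ φ₀ b₀ μ φ s β μb φb ωl αl : ℝ)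
    (hωl : 0 < ωl) (hαl : 0 < αl) (hs : ωl ≤ s) (hβ : αl ≤ β)
    (hμ₀ : |μ₀| ≤ μb) (hφ₀ : |φ₀| ≤ φb) (hμ : |μ| ≤ μb) (hφ : |φ| ≤ φb) :
    ((y ^ 2 / (2 * (1 + β * y ^ 2))) *
        (1 - ((μ₀ + φ₀ * y + b₀ * y * e' + e) - μ - φ * y) ^ 2 / (s * (1 + β * y ^ 2)))) ^ 2
      ≤ 3 * (1 / (2 * αl) * (1 + (16 * μb ^ 2 * (1 / ωl) + 16 * φb ^ 2 * (1 / (αl * ωl))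
          + 4 * b₀ ^ 2 * (1 / (αl * ωl)) + 4 * (1 / ωl)))) ^ 2 * (1 + e ^ 4 + e' ^ 4) := by
  have hβ0 : 0 < β := hαl.trans_le hβ
  have h1p : (0:ℝ) < 1 + β * y ^ 2 := by nlinarith [mul_nonneg hβ0.le (sq_nonneg y)]
  have hd : 0 < s * (1 + β * y ^ 2) := mul_pos (hωl.trans_le hs) h1p
  have hμb : 0 ≤ μb := (abs_nonneg μ₀).trans hμ₀
  have hφb : 0 ≤ φb := (abs_nonneg φ₀).trans hφ₀
  set c2 : ℝ := 1 / (αl * ωl) with hc2def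
  have hc2 : 0 ≤ c2 := by positivity
  have hwl : (0:ℝ) ≤ 1 / ωl := by positivity
  set d : ℝ := s * (1 + β * y ^ 2) with hddef
  set N : ℝ := (μ₀ + φ₀ * y + b₀ * y * e' + e) - μ - φ * y with hNdef
  set K : ℝ := 16 * μb ^ 2 * (1 / ωl) + 16 * φb ^ 2 * c2 + 4 * b₀ ^ 2 * c2 + 4 * (1 / ωl)
    with hKdef
  set L : ℝ := 1 / (2 * αl) * (1 + K) with hLdef
  clear_value c2 d N K L
  -- bounds on A = y^2 / (2*(1+β y^2))
  have hA1 : 0 ≤ y ^ 2 / (2 * (1 + β * y ^ 2)) := by positivity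
  have hA2 : y ^ 2 / (2 * (1 + β * y ^ 2)) ≤ 1 / (2 * αl) := by
    rw [div_le_div_iff₀ (by positivity) (by positivity)]
    nlinarith [mul_nonneg (sub_nonneg.2 hβ) (sq_nonneg y)]
  -- bound on N^2 / d
  have hNsq : N ^ 2 ≤ 4 * ((μ₀ - μ) ^ 2 + (φ₀ - φ) ^ 2 * y ^ 2 + b₀ ^ 2 * y ^ 2 * e' ^ 2
      + e ^ 2) := by
    have h := aux_sq4 (μ₀ - μ) ((φ₀ - φ) * y) (b₀ * y * e') e
    have e1 : N ^ 2 = ((μ₀ - μ) + (φ₀ - φ) * y + b₀ * y * e' + e) ^ 2 := by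
      rw [hNdef]; ring
    have e2 : 4 * ((μ₀ - μ) ^ 2 + (φ₀ - φ) ^ 2 * y ^ 2 + b₀ ^ 2 * y ^ 2 * e' ^ 2 + e ^ 2)
        = 4 * ((μ₀ - μ) ^ 2 + ((φ₀ - φ) * y) ^ 2 + (b₀ * y * e') ^ 2 + e ^ 2) := by ring
    rw [e1, e2]; exact h
  have h2d : y ^ 2 / d ≤ c2 := by
    rw [hc2def, hddef]; exact aux_bd2 y s β ωl αl hωl hαl hs hβ
  have hinv : 1 / d ≤ 1 / ωl := by
    rw [hddef]; exact aux_bd3 y s β ωl αl hωl hαl hs hβ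
  have hinv0 : 0 ≤ 1 / d := by
    rw [hddef] at hd ⊢; positivity
  have h2d0 : 0 ≤ y ^ 2 / d := div_nonneg (sq_nonneg y) hd.le
  have hμμ : (μ₀ - μ) ^ 2 ≤ 4 * μb ^ 2 := by
    have h : |μ₀ - μ| ≤ 2 * μb := (abs_sub μ₀ μ).trans (by linarith)
    calc (μ₀ - μ) ^ 2 ≤ (2 * μb) ^ 2 := sq_le_sq' (abs_le.mp h).1 (abs_le.mp h).2
      _ = 4 * μb ^ 2 := by ring
  have hφφ : (φ₀ - φ) ^ 2 ≤ 4 * φb ^ 2 := by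
    have h : |φ₀ - φ| ≤ 2 * φb := (abs_sub φ₀ φ).trans (by linarith)
    calc (φ₀ - φ) ^ 2 ≤ (2 * φb) ^ 2 := sq_le_sq' (abs_le.mp h).1 (abs_le.mp h).2
      _ = 4 * φb ^ 2 := by ring
  have hfrac : N ^ 2 / d ≤ K * (1 + e ^ 2 + e' ^ 2) := by
    have step1 : N ^ 2 / d ≤ (4 * ((μ₀ - μ) ^ 2 + (φ₀ - φ) ^ 2 * y ^ 2
        + b₀ ^ 2 * y ^ 2 * e' ^ 2 + e ^ 2)) / d := by gcongr
    have step2 : (4 * ((μ₀ - μ) ^ 2 + (φ₀ - φ) ^ 2 * y ^ 2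
        + b₀ ^ 2 * y ^ 2 * e' ^ 2 + e ^ 2)) / d
        = 4 * ((μ₀ - μ) ^ 2 * (1 / d) + (φ₀ - φ) ^ 2 * (y ^ 2 / d)
          + (b₀ ^ 2 * e' ^ 2) * (y ^ 2 / d) + e ^ 2 * (1 / d)) := by ring
    have t1 : (μ₀ - μ) ^ 2 * (1 / d) ≤ 4 * μb ^ 2 * (1 / ωl) :=
      mul_le_mul hμμ hinv hinv0 (by positivity)
    have t2 : (φ₀ - φ) ^ 2 * (y ^ 2 / d) ≤ 4 * φb ^ 2 * c2 :=
      mul_le_mul hφφ h2d h2d0 (by positivity)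
    have t3 : (b₀ ^ 2 * e' ^ 2) * (y ^ 2 / d) ≤ (b₀ ^ 2 * e' ^ 2) * c2 :=
      mul_le_mul_of_nonneg_left h2d (by positivity)
    have t4 : e ^ 2 * (1 / d) ≤ e ^ 2 * (1 / ωl) :=
      mul_le_mul_of_nonneg_left hinv (sq_nonneg e)
    have hKa : 4 * b₀ ^ 2 * c2 ≤ K := by
      rw [hKdef]
      linarith [mul_nonneg (sq_nonneg μb) hwl, mul_nonneg (sq_nonneg φb) hc2, hwl]
    have hKb : 4 * (1 / ωl) ≤ K := by
      rw [hKdef]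
      linarith [mul_nonneg (sq_nonneg μb) hwl, mul_nonneg (sq_nonneg φb) hc2,
        mul_nonneg (sq_nonneg b₀) hc2]
    have hKc : 16 * μb ^ 2 * (1 / ωl) + 16 * φb ^ 2 * c2 ≤ K := by
      rw [hKdef]
      linarith [mul_nonneg (sq_nonneg b₀) hc2, hwl]
    calc N ^ 2 / d ≤ 4 * ((μ₀ - μ) ^ 2 * (1 / d) + (φ₀ - φ) ^ 2 * (y ^ 2 / d)
          + (b₀ ^ 2 * e' ^ 2) * (y ^ 2 / d) + e ^ 2 * (1 / d)) := by
          rw [← step2]; exact step1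
      _ ≤ 4 * (4 * μb ^ 2 * (1 / ωl) + 4 * φb ^ 2 * c2 + (b₀ ^ 2 * e' ^ 2) * c2
          + e ^ 2 * (1 / ωl)) := by linarith
      _ ≤ K * (1 + e ^ 2 + e' ^ 2) := by
          linarith only [mul_nonneg (sub_nonneg.2 hKa) (sq_nonneg e'),
            mul_nonneg (sub_nonneg.2 hKb) (sq_nonneg e), hKc]
  have hK0 : 0 ≤ K := by
    rw [hKdef]
    linarith [mul_nonneg (sq_nonneg μb) hwl, mul_nonneg (sq_nonneg φb) hc2,
      mul_nonneg (sq_nonneg b₀) hc2, hwl]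
  have hKE : 0 ≤ K * (1 + e ^ 2 + e' ^ 2) := mul_nonneg hK0 (by positivity)
  have hN0 : 0 ≤ N ^ 2 / d := div_nonneg (sq_nonneg N) hd.le
  have h1N : |1 - N ^ 2 / d| ≤ 1 + K * (1 + e ^ 2 + e' ^ 2) :=
    abs_le.mpr ⟨by linarith, by linarith⟩
  have habs : |(y ^ 2 / (2 * (1 + β * y ^ 2))) * (1 - N ^ 2 / d)|
      ≤ 1 / (2 * αl) * (1 + K * (1 + e ^ 2 + e' ^ 2)) := by
    rw [abs_mul, abs_of_nonneg hA1]
    exact mul_le_mul hA2 h1N (abs_nonneg _) (by positivity)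
  have hstep : 1 / (2 * αl) * (1 + K * (1 + e ^ 2 + e' ^ 2)) ≤ L * (1 + e ^ 2 + e' ^ 2) := by
    have key : 1 + K * (1 + e ^ 2 + e' ^ 2) ≤ (1 + K) * (1 + e ^ 2 + e' ^ 2) := by
      linarith only [sq_nonneg e, sq_nonneg e']
    calc 1 / (2 * αl) * (1 + K * (1 + e ^ 2 + e' ^ 2))
        ≤ 1 / (2 * αl) * ((1 + K) * (1 + e ^ 2 + e' ^ 2)) :=
          mul_le_mul_of_nonneg_left key (by positivity)
      _ = L * (1 + e ^ 2 + e' ^ 2) := by rw [hLdef]; ring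
  have habs2 : |(y ^ 2 / (2 * (1 + β * y ^ 2))) * (1 - N ^ 2 / d)|
      ≤ L * (1 + e ^ 2 + e' ^ 2) := habs.trans hstep
  have hL0 : 0 ≤ L := by
    rw [hLdef]
    exact mul_nonneg (by positivity) (by linarith)
  have hsq : ((y ^ 2 / (2 * (1 + β * y ^ 2))) * (1 - N ^ 2 / d)) ^ 2
      ≤ (L * (1 + e ^ 2 + e' ^ 2)) ^ 2 := by
    rw [← sq_abs]
    exact pow_le_pow_left₀ (abs_nonneg _) habs2 2
  have hkey : (1 + e ^ 2 + e' ^ 2) ^ 2 ≤ 3 * (1 + e ^ 4 + e' ^ 4) := aux_sq3 e e'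
  calc ((y ^ 2 / (2 * (1 + β * y ^ 2))) * (1 - N ^ 2 / d)) ^ 2
      ≤ (L * (1 + e ^ 2 + e' ^ 2)) ^ 2 := hsq
    _ = L ^ 2 * (1 + e ^ 2 + e' ^ 2) ^ 2 := by ring
    _ ≤ L ^ 2 * (3 * (1 + e ^ 4 + e' ^ 4)) := mul_le_mul_of_nonneg_left hkey (sq_nonneg L)
    _ = 3 * L ^ 2 * (1 + e ^ 4 + e' ^ 4) := by ring

set_option maxHeartbeats 1000000 in
lemma env1_bound (y e e' μ₀ φ₀ b₀ μ φ s β μb φb ωl αl : ℝ)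
    (hωl : 0 < ωl) (hαl : 0 < αl) (hs : ωl ≤ s) (hβ : αl ≤ β)
    (hμ₀ : |μ₀| ≤ μb) (hφ₀ : |φ₀| ≤ φb) (hμ : |μ| ≤ μb) (hφ : |φ| ≤ φb) :
    (y * ((μ₀ + φ₀ * y + b₀ * y * e' + e) - μ - φ * y) / (s * (1 + β * y ^ 2))) ^ 2
      ≤ 3 * ((αl + 1) / (αl * ωl) * (2 * μb) + 1 / (αl * ωl) * (2 * φb)
          + 1 / (αl * ωl) * |b₀| + (αl + 1) / (αl * ωl)) ^ 2 * (1 + e ^ 2 + e' ^ 2) := by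
  have hβ0 : 0 < β := hαl.trans_le hβ
  have hd : 0 < s * (1 + β * y ^ 2) := by
    have : (0:ℝ) < 1 + β * y ^ 2 := by nlinarith [mul_nonneg hβ0.le (sq_nonneg y)]
    exact mul_pos (hωl.trans_le hs) this
  set c1 : ℝ := (αl + 1) / (αl * ωl) with hc1def
  set c2 : ℝ := 1 / (αl * ωl) with hc2def
  have hc1 : 0 ≤ c1 := by positivity
  have hc2 : 0 ≤ c2 := by positivity
  have hμb : 0 ≤ μb := (abs_nonneg μ₀).trans hμ₀
  have hφb : 0 ≤ φb := (abs_nonneg φ₀).trans hφ₀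
  set d : ℝ := s * (1 + β * y ^ 2) with hddef
  have heq : y * ((μ₀ + φ₀ * y + b₀ * y * e' + e) - μ - φ * y) / d
      = (μ₀ - μ) * (y / d) + ((φ₀ - φ) + b₀ * e') * (y ^ 2 / d) + e * (y / d) := by
    field_simp
    ring
  have hyd : |y / d| ≤ c1 := by
    rw [abs_div, abs_of_pos hd]
    exact aux_bd1 y s β ωl αl hωl hαl hs hβ
  have hy2d : |y ^ 2 / d| ≤ c2 := by
    rw [abs_div, abs_of_pos hd, abs_pow, sq_abs]
    exact aux_bd2 y s β ωl αl hωl hαl hs hβ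
  set C1 : ℝ := c1 * (2 * μb) + c2 * (2 * φb) + c2 * |b₀| + c1 with hC1def
  have habs : |y * ((μ₀ + φ₀ * y + b₀ * y * e' + e) - μ - φ * y) / d|
      ≤ C1 * (1 + |e| + |e'|) := by
    rw [heq]
    have h1 : |(μ₀ - μ) * (y / d)| ≤ 2 * μb * c1 := by
      rw [abs_mul]
      refine mul_le_mul ?_ hyd (abs_nonneg _) (by linarith)
      calc |μ₀ - μ| ≤ |μ₀| + |μ| := abs_sub μ₀ μ
        _ ≤ 2 * μb := by linarith
    have h2 : |((φ₀ - φ) + b₀ * e') * (y ^ 2 / d)| ≤ (2 * φb + |b₀| * |e'|) * c2 := by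
      rw [abs_mul]
      refine mul_le_mul ?_ hy2d (abs_nonneg _) (by positivity)
      calc |(φ₀ - φ) + b₀ * e'| ≤ |φ₀ - φ| + |b₀ * e'| := abs_add_le _ _
        _ ≤ (|φ₀| + |φ|) + |b₀| * |e'| := by rw [abs_mul]; gcongr; exact abs_sub φ₀ φ
        _ ≤ 2 * φb + |b₀| * |e'| := by linarith
    have h3 : |e * (y / d)| ≤ |e| * c1 := by
      rw [abs_mul]
      exact mul_le_mul_of_nonneg_left hyd (abs_nonneg e)
    calc |(μ₀ - μ) * (y / d) + ((φ₀ - φ) + b₀ * e') * (y ^ 2 / d) + e * (y / d)|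
        ≤ |(μ₀ - μ) * (y / d) + ((φ₀ - φ) + b₀ * e') * (y ^ 2 / d)| + |e * (y / d)| :=
          abs_add_le _ _
      _ ≤ |(μ₀ - μ) * (y / d)| + |((φ₀ - φ) + b₀ * e') * (y ^ 2 / d)| + |e * (y / d)| := by
          have := abs_add_le ((μ₀ - μ) * (y / d)) (((φ₀ - φ) + b₀ * e') * (y ^ 2 / d))
          linarith
      _ ≤ 2 * μb * c1 + (2 * φb + |b₀| * |e'|) * c2 + |e| * c1 := by linarith
      _ ≤ C1 * (1 + |e| + |e'|) := by
          have hA : c1 ≤ C1 := by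
            rw [hC1def]
            nlinarith [mul_nonneg hc1 hμb, mul_nonneg hc2 hφb,
              mul_nonneg hc2 (abs_nonneg b₀)]
          have hB : c2 * |b₀| ≤ C1 := by
            rw [hC1def]
            nlinarith [mul_nonneg hc1 hμb, mul_nonneg hc2 hφb, hc1]
          have hC : c1 * (2 * μb) + c2 * (2 * φb) ≤ C1 := by
            rw [hC1def]
            have : 0 ≤ c2 * |b₀| := mul_nonneg hc2 (abs_nonneg b₀)
            linarith
          have h1 : 0 ≤ (C1 - c1) * |e| := mul_nonneg (by linarith) (abs_nonneg e)
          have h2 : 0 ≤ (C1 - c2 * |b₀|) * |e'| := mul_nonneg (by linarith) (abs_nonneg e')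
          nlinarith [h1, h2]
  have hC1 : 0 ≤ C1 := by positivity
  have hsq : (y * ((μ₀ + φ₀ * y + b₀ * y * e' + e) - μ - φ * y) / d) ^ 2
      ≤ (C1 * (1 + |e| + |e'|)) ^ 2 := by
    rw [← sq_abs]
    exact pow_le_pow_left₀ (abs_nonneg _) habs 2
  refine hsq.trans ?_
  have hkey : (1 + |e| + |e'|) ^ 2 ≤ 3 * (1 + e ^ 2 + e' ^ 2) := by
    nlinarith [sq_nonneg (|e| - |e'|), sq_nonneg (1 - |e|), sq_nonneg (1 - |e'|),
      sq_abs e, sq_abs e', abs_nonneg e, abs_nonneg e']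
  calc (C1 * (1 + |e| + |e'|)) ^ 2 = C1 ^ 2 * (1 + |e| + |e'|) ^ 2 := by ring
    _ ≤ C1 ^ 2 * (3 * (1 + e ^ 2 + e' ^ 2)) :=
        mul_le_mul_of_nonneg_left hkey (sq_nonneg C1)
    _ = 3 * C1 ^ 2 * (1 + e ^ 2 + e' ^ 2) := by ring


set_option maxHeartbeats 1000000 in
/-- under fourth moments of the errors, the score components in `φ` and `β`
have square-integrable envelopes over `Θ`. -/
theorem qll_score_square_integrable_envelopes
    {Ω : Type*} [MeasurableSpace Ω] (P : Measure Ω) [IsProbabilityMeasure P]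
    (Y ε ε' : Ω → ℝ)
    (hYm : Measurable Y) (hε : Measurable ε) (hε' : Measurable ε')
    (hindep : iIndepFun ![Y, ε, ε'] P)
    (μ₀ φ₀ b₀ σ₀sq : ℝ)
    (hεint : Integrable ε P) (hεmean : ∫ ω, ε ω ∂P = 0)
    (hε'int : Integrable ε' P) (hε'mean : ∫ ω, ε' ω ∂P = 0)
    (hεsq : Integrable (fun ω => ε ω ^ 2) P) (hεvar : ∫ ω, ε ω ^ 2 ∂P = σ₀sq)
    (hε'sq : Integrable (fun ω => ε' ω ^ 2) P) (hε'var : ∫ ω, ε' ω ^ 2 ∂P = σ₀sq)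
    (hσ : 0 < σ₀sq)
    (hε4 : Integrable (fun ω => ε ω ^ 4) P) (hε'4 : Integrable (fun ω => ε' ω ^ 4) P)
    (μb φb ωl ωu αl αu : ℝ)
    (hμb : 0 < μb) (hφb : 0 < φb) (hωl : 0 < ωl) (hωu : ωl ≤ ωu)
    (hαl : 0 < αl) (hαu : αl ≤ αu)
    (hθ₀ : (μ₀, φ₀, σ₀sq, b₀ ^ 2) ∈ Theta μb φb ωl ωu αl αu) :
    Integrable (fun ω => ⨆ θ : Theta μb φb ωl ωu αl αu,
      (Y ω * ((μ₀ + φ₀ * Y ω + b₀ * Y ω * ε' ω + ε ω) - θ.1.1 - θ.1.2.1 * Y ω) /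
        (θ.1.2.2.1 * (1 + θ.1.2.2.2 * Y ω ^ 2))) ^ 2) P ∧
    Integrable (fun ω => ⨆ θ : Theta μb φb ωl ωu αl αu,
      ((Y ω ^ 2 / (2 * (1 + θ.1.2.2.2 * Y ω ^ 2))) *
        (1 - ((μ₀ + φ₀ * Y ω + b₀ * Y ω * ε' ω + ε ω) - θ.1.1 - θ.1.2.1 * Y ω) ^ 2 /
          (θ.1.2.2.1 * (1 + θ.1.2.2.2 * Y ω ^ 2)))) ^ 2) P := by
  obtain ⟨hm0, hp0, -, -, -, -⟩ := id hθ₀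
  simp only at hm0 hp0
  haveI hKne : Nonempty (Theta μb φb ωl ωu αl αu) := ⟨⟨(μ₀, φ₀, σ₀sq, b₀ ^ 2), hθ₀⟩⟩
  obtain ⟨D, hDc, hDd⟩ := TopologicalSpace.exists_countable_dense (Theta μb φb ωl ωu αl αu)
  haveI : Countable D := hDc.to_subtype
  -- constants
  set c1 : ℝ := (αl + 1) / (αl * ωl) with hc1def
  set c2 : ℝ := 1 / (αl * ωl) with hc2def
  set C1 : ℝ := c1 * (2 * μb) + c2 * (2 * φb) + c2 * |b₀| + c1 with hC1def
  set C2 : ℝ := 1 / (2 * αl) * (1 + (16 * μb ^ 2 * (1 / ωl) + 16 * φb ^ 2 * c2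
    + 4 * b₀ ^ 2 * c2 + 4 * (1 / ωl))) with hC2def
  -- abbreviations for the two families
  set F1 : Theta μb φb ωl ωu αl αu → Ω → ℝ := fun θ ω =>
    (Y ω * ((μ₀ + φ₀ * Y ω + b₀ * Y ω * ε' ω + ε ω) - θ.1.1 - θ.1.2.1 * Y ω) /
      (θ.1.2.2.1 * (1 + θ.1.2.2.2 * Y ω ^ 2))) ^ 2 with hF1def
  set F2 : Theta μb φb ωl ωu αl αu → Ω → ℝ := fun θ ω =>
    ((Y ω ^ 2 / (2 * (1 + θ.1.2.2.2 * Y ω ^ 2))) *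
      (1 - ((μ₀ + φ₀ * Y ω + b₀ * Y ω * ε' ω + ε ω) - θ.1.1 - θ.1.2.1 * Y ω) ^ 2 /
        (θ.1.2.2.1 * (1 + θ.1.2.2.2 * Y ω ^ 2)))) ^ 2 with hF2def
  -- pointwise bounds
  have hbd1 : ∀ (ω : Ω) (θ : Theta μb φb ωl ωu αl αu),
      F1 θ ω ≤ 3 * C1 ^ 2 * (1 + ε ω ^ 2 + ε' ω ^ 2) := by
    intro ω θ
    obtain ⟨ht1, ht2, ht3, -, ht5, -⟩ := θ.2
    exact env1_bound (Y ω) (ε ω) (ε' ω) μ₀ φ₀ b₀ θ.1.1 θ.1.2.1 θ.1.2.2.1 θ.1.2.2.2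
      μb φb ωl αl hωl hαl ht3 ht5 hm0 hp0 ht1 ht2
  have hbd2 : ∀ (ω : Ω) (θ : Theta μb φb ωl ωu αl αu),
      F2 θ ω ≤ 3 * C2 ^ 2 * (1 + ε ω ^ 4 + ε' ω ^ 4) := by
    intro ω θ
    obtain ⟨ht1, ht2, ht3, -, ht5, -⟩ := θ.2
    exact env2_bound (Y ω) (ε ω) (ε' ω) μ₀ φ₀ b₀ θ.1.1 θ.1.2.1 θ.1.2.2.1 θ.1.2.2.2
      μb φb ωl αl hωl hαl ht3 ht5 hm0 hp0 ht1 ht2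
  -- positivity of denominators
  have hden : ∀ (ω : Ω) (θ : Theta μb φb ωl ωu αl αu),
      0 < θ.1.2.2.1 * (1 + θ.1.2.2.2 * Y ω ^ 2) := by
    intro ω θ
    obtain ⟨-, -, ht3, -, ht5, -⟩ := θ.2
    have h1 : 0 < θ.1.2.2.1 := hωl.trans_le ht3
    have h2 : (0:ℝ) < 1 + θ.1.2.2.2 * Y ω ^ 2 := by
      nlinarith [mul_nonneg (hαl.trans_le ht5).le (sq_nonneg (Y ω))]
    exact mul_pos h1 h2
  have hden2 : ∀ (ω : Ω) (θ : Theta μb φb ωl ωu αl αu),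
      (0:ℝ) < 2 * (1 + θ.1.2.2.2 * Y ω ^ 2) := by
    intro ω θ
    obtain ⟨-, -, ht3, -, ht5, -⟩ := θ.2
    nlinarith [mul_nonneg (hαl.trans_le ht5).le (sq_nonneg (Y ω))]
  -- continuity in θ
  have hcv : Continuous fun θ : Theta μb φb ωl ωu αl αu => (θ : ℝ × ℝ × ℝ × ℝ) :=
    continuous_subtype_val
  have hc_μ : Continuous fun θ : Theta μb φb ωl ωu αl αu => θ.1.1 :=
    continuous_fst.comp hcv
  have hc_φ : Continuous fun θ : Theta μb φb ωl ωu αl αu => θ.1.2.1 :=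
    continuous_fst.comp (continuous_snd.comp hcv)
  have hc_s : Continuous fun θ : Theta μb φb ωl ωu αl αu => θ.1.2.2.1 :=
    continuous_fst.comp (continuous_snd.comp (continuous_snd.comp hcv))
  have hc_β : Continuous fun θ : Theta μb φb ωl ωu αl αu => θ.1.2.2.2 :=
    continuous_snd.comp (continuous_snd.comp (continuous_snd.comp hcv))
  have hcont1 : ∀ ω : Ω, Continuous fun θ : Theta μb φb ωl ωu αl αu => F1 θ ω := by
    intro ω
    apply Continuous.pow
    apply Continuous.div
    · exact continuous_const.mul ((continuous_const.sub hc_μ).sub (hc_φ.mul continuous_const))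
    · exact hc_s.mul (continuous_const.add (hc_β.mul continuous_const))
    · exact fun θ => (hden ω θ).ne'
  have hcont2 : ∀ ω : Ω, Continuous fun θ : Theta μb φb ωl ωu αl αu => F2 θ ω := by
    intro ω
    apply Continuous.pow
    apply Continuous.mul
    · exact Continuous.div continuous_const
        (continuous_const.mul (continuous_const.add (hc_β.mul continuous_const)))
        (fun θ => (hden2 ω θ).ne')
    · refine Continuous.sub continuous_const (Continuous.div ?_ ?_ ?_)
      · exact (((continuous_const.sub hc_μ).sub (hc_φ.mul continuous_const)).pow 2)
      · exact hc_s.mul (continuous_const.add (hc_β.mul continuous_const))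
      · exact fun θ => (hden ω θ).ne'
  -- bounded above
  have hbdd1 : ∀ ω : Ω, BddAbove (Set.range fun θ => F1 θ ω) := by
    intro ω
    refine ⟨3 * C1 ^ 2 * (1 + ε ω ^ 2 + ε' ω ^ 2), ?_⟩
    rintro _ ⟨θ, rfl⟩
    exact hbd1 ω θ
  have hbdd2 : ∀ ω : Ω, BddAbove (Set.range fun θ => F2 θ ω) := by
    intro ω
    refine ⟨3 * C2 ^ 2 * (1 + ε ω ^ 4 + ε' ω ^ 4), ?_⟩
    rintro _ ⟨θ, rfl⟩
    exact hbd2 ω θ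
  -- rewrite sup over a countable dense subset
  have heq1 : (fun ω => ⨆ θ, F1 θ ω) = fun ω => ⨆ d : D, F1 d ω :=
    funext fun ω => aux_sup_dense hDd (hcont1 ω) (hbdd1 ω)
  have heq2 : (fun ω => ⨆ θ, F2 θ ω) = fun ω => ⨆ d : D, F2 d ω :=
    funext fun ω => aux_sup_dense hDd (hcont2 ω) (hbdd2 ω)
  -- measurability
  have hmF1 : ∀ θ : Theta μb φb ωl ωu αl αu, Measurable fun ω => F1 θ ω := by
    intro θ
    apply Measurable.pow_const
    exact Measurable.div
      (hYm.mul ((((measurable_const.add (measurable_const.mul hYm)).add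
        ((measurable_const.mul hYm).mul hε')).add hε).sub measurable_const
        |>.sub (measurable_const.mul hYm)))
      (measurable_const.mul (measurable_const.add
        (measurable_const.mul (hYm.pow_const 2))))
  have hmF2 : ∀ θ : Theta μb φb ωl ωu αl αu, Measurable fun ω => F2 θ ω := by
    intro θ
    apply Measurable.pow_const
    refine Measurable.mul ?_ ?_
    · exact Measurable.div (hYm.pow_const 2)
        (measurable_const.mul (measurable_const.add
          (measurable_const.mul (hYm.pow_const 2))))
    · refine Measurable.sub measurable_const (Measurable.div ?_ ?_)
      · exact ((((measurable_const.add (measurable_const.mul hYm)).add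
          ((measurable_const.mul hYm).mul hε')).add hε).sub measurable_const
          |>.sub (measurable_const.mul hYm)).pow_const 2
      · exact measurable_const.mul (measurable_const.add
          (measurable_const.mul (hYm.pow_const 2)))
  have hmeas1 : Measurable fun ω => ⨆ θ, F1 θ ω := by
    rw [heq1]
    exact Measurable.iSup fun d => hmF1 d
  have hmeas2 : Measurable fun ω => ⨆ θ, F2 θ ω := by
    rw [heq2]
    exact Measurable.iSup fun d => hmF2 d
  -- nonnegativity of the sup
  have hnn1 : ∀ ω : Ω, 0 ≤ ⨆ θ, F1 θ ω := fun ω =>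
    le_trans (sq_nonneg _) (le_ciSup (hbdd1 ω) (⟨(μ₀, φ₀, σ₀sq, b₀ ^ 2), hθ₀⟩ :
      Theta μb φb ωl ωu αl αu))
  have hnn2 : ∀ ω : Ω, 0 ≤ ⨆ θ, F2 θ ω := fun ω =>
    le_trans (sq_nonneg _) (le_ciSup (hbdd2 ω) (⟨(μ₀, φ₀, σ₀sq, b₀ ^ 2), hθ₀⟩ :
      Theta μb φb ωl ωu αl αu))
  -- integrable majorants
  have hg1 : Integrable (fun ω => 3 * C1 ^ 2 * (1 + ε ω ^ 2 + ε' ω ^ 2)) P :=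
    (((integrable_const (1:ℝ)).add hεsq).add hε'sq).const_mul _
  have hg2 : Integrable (fun ω => 3 * C2 ^ 2 * (1 + ε ω ^ 4 + ε' ω ^ 4)) P :=
    (((integrable_const (1:ℝ)).add hε4).add hε'4).const_mul _
  constructor
  · refine Integrable.mono' hg1 hmeas1.aestronglyMeasurable (Filter.Eventually.of_forall
      fun ω => ?_)
    rw [Real.norm_eq_abs, abs_of_nonneg (hnn1 ω)]
    exact ciSup_le fun θ => hbd1 ω θ
  · refine Integrable.mono' hg2 hmeas2.aestronglyMeasurable (Filter.Eventually.of_forall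
      fun ω => ?_)
    rw [Real.norm_eq_abs, abs_of_nonneg (hnn2 ω)]
    exact ciSup_le fun θ => hbd2 ω θ
end
end

section
/- Let Y be a real random variable with P(Y = c) < 1 for every real c (Y is nondegenerate), and let b₀ ≠ 0 and σ₀² > 0 be real constants. Then the 2×2 symmetric matrix M with entries M₁₁ = E[1/(σ₀²(1 + b₀²Y²))], M₁₂ = M₂₁ = E[Y/(σ₀²(1 + b₀²Y²))] and M₂₂ = E[Y²/(σ₀²(1 + b₀²Y²))] has finite entries and is positive definite. -/
open MeasureTheory ProbabilityTheory

noncomputable section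

/-- for nondegenerate `Y`, `b₀ ≠ 0` and `σ₀² > 0`, the matrix with entries
`E[1/(σ₀²(1+b₀²Y²))]`, `E[Y/(σ₀²(1+b₀²Y²))]`, `E[Y²/(σ₀²(1+b₀²Y²))]` is (finite and)
positive definite. -/
theorem first_information_block_posdef
    {Ω : Type*} [MeasurableSpace Ω] (P : Measure Ω) [IsProbabilityMeasure P]
    (Y : Ω → ℝ) (hY : Measurable Y) (b₀ σ₀sq : ℝ) (hb : b₀ ≠ 0) (hσ : 0 < σ₀sq)
    (hnd : ∀ c : ℝ, P {ω | Y ω = c} < 1) :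
    Integrable (fun ω => 1 / (σ₀sq * (1 + b₀ ^ 2 * Y ω ^ 2))) P ∧
    Integrable (fun ω => Y ω / (σ₀sq * (1 + b₀ ^ 2 * Y ω ^ 2))) P ∧
    Integrable (fun ω => Y ω ^ 2 / (σ₀sq * (1 + b₀ ^ 2 * Y ω ^ 2))) P ∧
    (!![∫ ω, 1 / (σ₀sq * (1 + b₀ ^ 2 * Y ω ^ 2)) ∂P,
        ∫ ω, Y ω / (σ₀sq * (1 + b₀ ^ 2 * Y ω ^ 2)) ∂P;
        ∫ ω, Y ω / (σ₀sq * (1 + b₀ ^ 2 * Y ω ^ 2)) ∂P,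
        ∫ ω, Y ω ^ 2 / (σ₀sq * (1 + b₀ ^ 2 * Y ω ^ 2)) ∂P] :
      Matrix (Fin 2) (Fin 2) ℝ).PosDef := by
  have hb2 : 0 < b₀ ^ 2 := by positivity
  have hden : ∀ ω, 0 < σ₀sq * (1 + b₀ ^ 2 * Y ω ^ 2) := fun ω => by positivity
  have hgm : Measurable fun ω => σ₀sq * (1 + b₀ ^ 2 * Y ω ^ 2) := by measurability
  have h1 : Integrable (fun ω => 1 / (σ₀sq * (1 + b₀ ^ 2 * Y ω ^ 2))) P := by
    apply Integrable.mono' (integrable_const (1/σ₀sq))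
    · exact ((measurable_const.div hgm)).aestronglyMeasurable
    · refine ae_of_all _ fun ω => ?_
      rw [Real.norm_eq_abs, abs_of_pos (by positivity)]
      rw [div_le_div_iff₀ (hden ω) hσ]
      nlinarith [mul_nonneg hσ.le (mul_nonneg (sq_nonneg b₀) (sq_nonneg (Y ω)))]
  have h2 : Integrable (fun ω => Y ω / (σ₀sq * (1 + b₀ ^ 2 * Y ω ^ 2))) P := by
    apply Integrable.mono' (integrable_const (1/(2 * |b₀| * σ₀sq)))
    · exact (hY.div hgm).aestronglyMeasurable
    · refine ae_of_all _ fun ω => ?_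
      have hab : 0 < |b₀| := abs_pos.mpr hb
      rw [Real.norm_eq_abs, abs_div, abs_of_pos (hden ω), div_le_div_iff₀ (hden ω) (by positivity)]
      have key : |b₀| ^ 2 * |Y ω| ^ 2 = b₀ ^ 2 * Y ω ^ 2 := by rw [sq_abs, sq_abs]
      nlinarith [mul_nonneg hσ.le (sq_nonneg (|b₀| * |Y ω| - 1)), key]
  have h3 : Integrable (fun ω => Y ω ^ 2 / (σ₀sq * (1 + b₀ ^ 2 * Y ω ^ 2))) P := by
    apply Integrable.mono' (integrable_const (1/(b₀ ^ 2 * σ₀sq)))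
    · exact ((hY.pow_const 2).div hgm).aestronglyMeasurable
    · refine ae_of_all _ fun ω => ?_
      rw [Real.norm_eq_abs, abs_of_nonneg (by positivity), div_le_div_iff₀ (hden ω) (by positivity)]
      nlinarith [sq_nonneg (Y ω)]
  refine ⟨h1, h2, h3, Matrix.posDef_iff_dotProduct_mulVec.mpr ⟨?_, ?_⟩⟩
  · -- IsHermitian
    ext i j
    fin_cases i <;> fin_cases j <;> simp [Matrix.conjTranspose_apply]
  · intro x hx
    set A := ∫ ω, 1 / (σ₀sq * (1 + b₀ ^ 2 * Y ω ^ 2)) ∂P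
    set B := ∫ ω, Y ω / (σ₀sq * (1 + b₀ ^ 2 * Y ω ^ 2)) ∂P
    set C := ∫ ω, Y ω ^ 2 / (σ₀sq * (1 + b₀ ^ 2 * Y ω ^ 2)) ∂P
    have hquad : dotProduct (star x) (Matrix.mulVec (!![A, B; B, C] : Matrix (Fin 2) (Fin 2) ℝ) x)
        = x 0 ^ 2 * A + (2 * x 0 * x 1) * B + x 1 ^ 2 * C := by
      simp [dotProduct, Matrix.mulVec, Fin.sum_univ_two]
      ring
    rw [hquad]
    have hfun : ∀ ω, (x 0 + x 1 * Y ω) ^ 2 / (σ₀sq * (1 + b₀ ^ 2 * Y ω ^ 2))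
        = x 0 ^ 2 * (1 / (σ₀sq * (1 + b₀ ^ 2 * Y ω ^ 2)))
          + (2 * x 0 * x 1) * (Y ω / (σ₀sq * (1 + b₀ ^ 2 * Y ω ^ 2)))
          + x 1 ^ 2 * (Y ω ^ 2 / (σ₀sq * (1 + b₀ ^ 2 * Y ω ^ 2))) := by
      intro ω
      field_simp
      ring
    have hInt : Integrable (fun ω => (x 0 + x 1 * Y ω) ^ 2 / (σ₀sq * (1 + b₀ ^ 2 * Y ω ^ 2))) P := by
      have := ((h1.const_mul (x 0 ^ 2)).add (h2.const_mul (2 * x 0 * x 1))).add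
        (h3.const_mul (x 1 ^ 2))
      refine this.congr (ae_of_all _ fun ω => ?_)
      exact (hfun ω).symm
    have hEq : ∫ ω, (x 0 + x 1 * Y ω) ^ 2 / (σ₀sq * (1 + b₀ ^ 2 * Y ω ^ 2)) ∂P
        = x 0 ^ 2 * A + (2 * x 0 * x 1) * B + x 1 ^ 2 * C := by
      have hI12 : Integrable (fun ω => x 0 ^ 2 * (1 / (σ₀sq * (1 + b₀ ^ 2 * Y ω ^ 2)))
          + (2 * x 0 * x 1) * (Y ω / (σ₀sq * (1 + b₀ ^ 2 * Y ω ^ 2)))) P :=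
        (h1.const_mul _).add (h2.const_mul _)
      rw [show (fun ω => (x 0 + x 1 * Y ω) ^ 2 / (σ₀sq * (1 + b₀ ^ 2 * Y ω ^ 2)))
          = fun ω => x 0 ^ 2 * (1 / (σ₀sq * (1 + b₀ ^ 2 * Y ω ^ 2)))
            + (2 * x 0 * x 1) * (Y ω / (σ₀sq * (1 + b₀ ^ 2 * Y ω ^ 2)))
            + x 1 ^ 2 * (Y ω ^ 2 / (σ₀sq * (1 + b₀ ^ 2 * Y ω ^ 2))) from funext hfun]
      rw [integral_add hI12 (h3.const_mul _),
        integral_add (h1.const_mul _) (h2.const_mul _),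
        integral_const_mul, integral_const_mul, integral_const_mul]
    rw [← hEq]
    have hnn : ∀ ω, 0 ≤ (x 0 + x 1 * Y ω) ^ 2 / (σ₀sq * (1 + b₀ ^ 2 * Y ω ^ 2)) := by
      intro ω; positivity
    rcases lt_or_eq_of_le (integral_nonneg (Pi.le_def.mpr hnn)) with hpos | hzero
    · exact hpos
    exfalso
    have hae : (fun ω => (x 0 + x 1 * Y ω) ^ 2 / (σ₀sq * (1 + b₀ ^ 2 * Y ω ^ 2))) =ᵐ[P] 0 := by
      rw [← integral_eq_zero_iff_of_nonneg hnn hInt]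
      exact hzero.symm
    have hae2 : ∀ᵐ ω ∂P, x 0 + x 1 * Y ω = 0 := by
      filter_upwards [hae] with ω hω
      have hω' : (x 0 + x 1 * Y ω) ^ 2 / (σ₀sq * (1 + b₀ ^ 2 * Y ω ^ 2)) = 0 := hω
      have hsq : (x 0 + x 1 * Y ω) ^ 2 = 0 := by
        by_contra hne
        exact div_ne_zero hne (ne_of_gt (hden ω)) hω'
      exact pow_eq_zero_iff (two_ne_zero) |>.mp hsq
    by_cases hx1 : x 1 = 0
    · have hx0 : x 0 ≠ 0 := by
        intro h0
        apply hx
        funext i; fin_cases i <;> simpa [h0, hx1]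
      haveI : (ae P).NeBot := ae_neBot.mpr (IsProbabilityMeasure.ne_zero P)
      obtain ⟨ω, hω⟩ := hae2.exists
      rw [hx1] at hω
      simp at hω
      exact hx0 hω
    · set c := -(x 0) / x 1 with hc
      have hsub : ∀ᵐ ω ∂P, Y ω = c := by
        filter_upwards [hae2] with ω hω
        rw [hc, eq_div_iff hx1]
        linarith
      have : P {ω | Y ω = c} = 1 := by
        have hms : MeasurableSet {ω | Y ω = c} := hY (measurableSet_singleton c)
        have hcompl : P {ω | Y ω = c}ᶜ = 0 := by
          rw [Set.compl_setOf]
          exact ae_iff.mp hsub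
        have hsum := measure_add_measure_compl (μ := P) hms
        rw [hcompl, add_zero] at hsum
        simpa using hsum
      exact absurd this (ne_of_lt (hnd c))
end
end

section
/- Let Y be a real random variable with P(Y² = c) < 1 for every real c ≥ 0 (Y² is nondegenerate), and let b₀ ≠ 0 and σ₀² > 0 be real constants. Then the 2×2 symmetric matrix N with entries N₁₁ = 1/(2σ₀⁴), N₁₂ = N₂₁ = E[Y²/(2σ₀²(1 + b₀²Y²))] and N₂₂ = E[Y⁴/(2(1 + b₀²Y²)²)] has finite entries and is positive definite. -/
open MeasureTheory ProbabilityTheory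

noncomputable section

/-- for `Y` with nondegenerate square, `b₀ ≠ 0` and `σ₀² > 0`, the matrix with
entries `1/(2σ₀⁴)`, `E[Y²/(2σ₀²(1+b₀²Y²))]`, `E[Y⁴/(2(1+b₀²Y²)²)]` is (finite and)
positive definite. -/
theorem second_information_block_posdef
    {Ω : Type*} [MeasurableSpace Ω] (P : Measure Ω) [IsProbabilityMeasure P]
    (Y : Ω → ℝ) (hY : Measurable Y) (b₀ σ₀sq : ℝ) (hb : b₀ ≠ 0) (hσ : 0 < σ₀sq)
    (hnd : ∀ c : ℝ, 0 ≤ c → P {ω | Y ω ^ 2 = c} < 1) :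
    Integrable (fun ω => Y ω ^ 2 / (2 * σ₀sq * (1 + b₀ ^ 2 * Y ω ^ 2))) P ∧
    Integrable (fun ω => Y ω ^ 4 / (2 * (1 + b₀ ^ 2 * Y ω ^ 2) ^ 2)) P ∧
    (!![1 / (2 * σ₀sq ^ 2),
        ∫ ω, Y ω ^ 2 / (2 * σ₀sq * (1 + b₀ ^ 2 * Y ω ^ 2)) ∂P;
        ∫ ω, Y ω ^ 2 / (2 * σ₀sq * (1 + b₀ ^ 2 * Y ω ^ 2)) ∂P,
        ∫ ω, Y ω ^ 4 / (2 * (1 + b₀ ^ 2 * Y ω ^ 2) ^ 2) ∂P] :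
      Matrix (Fin 2) (Fin 2) ℝ).PosDef := by
  have hb2 : 0 < b₀ ^ 2 := by positivity
  set g : Ω → ℝ := fun ω => Y ω ^ 2 / (1 + b₀ ^ 2 * Y ω ^ 2) with hg
  have hden : ∀ ω, 0 < 1 + b₀ ^ 2 * Y ω ^ 2 := fun ω => by positivity
  have hg0 : ∀ ω, 0 ≤ g ω := fun ω => div_nonneg (sq_nonneg _) (hden ω).le
  have hg1 : ∀ ω, g ω ≤ 1 / b₀ ^ 2 := by
    intro ω
    rw [div_le_div_iff₀ (hden ω) hb2]
    nlinarith [sq_nonneg (Y ω)]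
  have hgm : Measurable g := by
    apply Measurable.div (by fun_prop)
    fun_prop
  have hgL2 : MemLp g 2 P :=
    memLp_of_bounded (ae_of_all _ fun ω => ⟨hg0 ω, hg1 ω⟩) hgm.aestronglyMeasurable 2
  have hgInt : Integrable g P := hgL2.integrable (by norm_num)
  have hg2Int : Integrable (fun ω => g ω ^ 2) P := by
    have := hgL2.integrable_sq
    simpa using this
  -- the two integrands in terms of g
  have heq1 : (fun ω => Y ω ^ 2 / (2 * σ₀sq * (1 + b₀ ^ 2 * Y ω ^ 2)))
      = fun ω => (1 / (2 * σ₀sq)) * g ω := by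
    funext ω
    field_simp [hg]
    simp only [hg]
    rw [mul_div_assoc', eq_div_iff (hden ω).ne']
    ring
  have heq2 : (fun ω => Y ω ^ 4 / (2 * (1 + b₀ ^ 2 * Y ω ^ 2) ^ 2))
      = fun ω => (1 / 2) * g ω ^ 2 := by
    funext ω
    rw [hg]
    rw [div_pow]
    field_simp
  have hI1 : Integrable (fun ω => Y ω ^ 2 / (2 * σ₀sq * (1 + b₀ ^ 2 * Y ω ^ 2))) P := by
    rw [heq1]; exact hgInt.const_mul _
  have hI2 : Integrable (fun ω => Y ω ^ 4 / (2 * (1 + b₀ ^ 2 * Y ω ^ 2) ^ 2)) P := by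
    rw [heq2]; exact hg2Int.const_mul _
  refine ⟨hI1, hI2, ?_⟩
  -- variance of g is positive
  have hvar : 0 < variance g P := by
    rcases lt_or_eq_of_le (variance_nonneg g P) with h | h
    · exact h
    exfalso
    have hev : evariance g P = 0 := by
      have hlt := hgL2.evariance_lt_top
      rw [variance] at h
      exact (ENNReal.toReal_eq_zero_iff _).mp h.symm |>.resolve_right hlt.ne
    have hae : g =ᵐ[P] fun _ => ∫ ω, g ω ∂P :=
      (evariance_eq_zero_iff hgm.aemeasurable).mp hev
    set m : ℝ := ∫ ω, g ω ∂P with hm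
    haveI : (ae P).NeBot := ae_neBot.2 (IsProbabilityMeasure.ne_zero P)
    obtain ⟨ω₀, hω₀⟩ := hae.exists
    have hkey : ∀ ω, g ω = m → Y ω ^ 2 * (1 - b₀ ^ 2 * m) = m := by
      intro ω hωm
      have := hden ω
      rw [hg] at hωm
      field_simp at hωm
      nlinarith [hωm]
    have hne : 1 - b₀ ^ 2 * m ≠ 0 := by
      intro h0
      have h1 := hkey ω₀ hω₀
      rw [h0, mul_zero] at h1
      have : b₀ ^ 2 * m = 1 := by linarith
      rw [← h1] at this
      simp at this
    set c : ℝ := m / (1 - b₀ ^ 2 * m) with hc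
    have hcω₀ : Y ω₀ ^ 2 = c := by
      rw [hc, eq_div_iff hne]; exact hkey ω₀ hω₀
    have hc0 : 0 ≤ c := hcω₀ ▸ sq_nonneg _
    have haec : ∀ᵐ ω ∂P, Y ω ^ 2 = c := by
      filter_upwards [hae] with ω hω
      have h1 := hkey ω hω
      rw [hc, eq_div_iff hne]; exact h1
    have hP1 : P {ω | Y ω ^ 2 = c} = 1 := by
      rw [← mem_ae_iff_prob_eq_one (by exact (hY.pow_const 2) (measurableSet_singleton c))]
      exact haec
    exact absurd hP1 (hnd c hc0).ne
  -- compute the matrix entries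
  have hint1 : (∫ ω, Y ω ^ 2 / (2 * σ₀sq * (1 + b₀ ^ 2 * Y ω ^ 2)) ∂P)
      = (1 / (2 * σ₀sq)) * ∫ ω, g ω ∂P := by
    rw [heq1, integral_const_mul]
  have hint2 : (∫ ω, Y ω ^ 4 / (2 * (1 + b₀ ^ 2 * Y ω ^ 2) ^ 2) ∂P)
      = (1 / 2) * ∫ ω, g ω ^ 2 ∂P := by
    rw [heq2, integral_const_mul]
  have hvdef : variance g P = (∫ ω, g ω ^ 2 ∂P) - (∫ ω, g ω ∂P) ^ 2 := by
    have := variance_eq_sub hgL2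
    simpa using this
  set Eg : ℝ := ∫ ω, g ω ∂P with hEg
  set Eg2 : ℝ := ∫ ω, g ω ^ 2 ∂P with hEg2
  have hvarlt : Eg ^ 2 < Eg2 := by
    have := hvar
    rw [hvdef] at this
    linarith
  refine Matrix.posDef_iff_dotProduct_mulVec.mpr ⟨?_, ?_⟩
  · unfold Matrix.IsHermitian
    ext i j
    fin_cases i <;> fin_cases j <;>
      simp [Matrix.conjTranspose, Matrix.transpose, Matrix.vecHead, Matrix.vecTail]
  · intro x hx
    have hx0 : x 0 ≠ 0 ∨ x 1 ≠ 0 := by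
      by_contra h
      push_neg at h
      apply hx
      funext i
      fin_cases i <;> simp [h.1, h.2]
    simp [hint1, hint2, Matrix.mulVec, dotProduct, Fin.sum_univ_two,
      Matrix.cons_val_zero, Matrix.cons_val_one, Matrix.head_cons]
    set a := x 0
    set bb := x 1
    rw [show ((σ₀sq ^ 2)⁻¹ : ℝ) = σ₀sq⁻¹ * σ₀sq⁻¹ from by rw [sq, mul_inv]]
    have hsinv : 0 < σ₀sq⁻¹ := by positivity
    rcases eq_or_ne bb 0 with hbz | hbz
    · have ha : a ≠ 0 := by
        rcases hx0 with h | h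
        · exact h
        · exact absurd hbz h
      rw [hbz]
      nlinarith [sq_pos_of_ne_zero ha, mul_pos hsinv hsinv,
        mul_pos (mul_pos hsinv hsinv) (sq_pos_of_ne_zero ha)]
    · nlinarith [sq_nonneg (σ₀sq⁻¹ * a + Eg * bb),
        mul_pos (sub_pos.mpr hvarlt) (sq_pos_of_ne_zero hbz)]
end
end

section
/- Assume b₀ ≠ 0. Then the Gaussian quasi-likelihood score evaluated at θ₀ is conditionally centered: almost surely, E[(Z − μ₀ − φ₀Y)/(σ₀²(1 + b₀²Y²)) | G] = 0, E[Y(Z − μ₀ − φ₀Y)/(σ₀²(1 + b₀²Y²)) | G] = 0, E[1 − (Z − μ₀ − φ₀Y)²/(σ₀²(1 + b₀²Y²)) | G] = 0, and E[(Y²/(1 + b₀²Y²))(1 − (Z − μ₀ − φ₀Y)²/(σ₀²(1 + b₀²Y²))) | G] = 0. -/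
open MeasureTheory ProbabilityTheory

set_option maxHeartbeats 1000000

noncomputable section

/-- with `Z = μ₀ + φ₀ Y + b₀ Y ε′ + ε`, the four components of the Gaussian
quasi-likelihood score at `θ₀` are conditionally centered given `G`. -/
theorem qll_score_conditionally_centered
    {Ω : Type*} (G : MeasurableSpace Ω) {mΩ : MeasurableSpace Ω} (P : Measure Ω) [IsProbabilityMeasure P]
    (hG : G ≤ mΩ)
    (Y ε ε' : Ω → ℝ)
    (hY : Measurable[G] Y) (hε : Measurable ε) (hε' : Measurable ε')
    (hindep : IndepFun ε ε' P)
    (hindepG : Indep (MeasurableSpace.comap (fun ω => (ε ω, ε' ω)) inferInstance) G P)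
    (μ₀ φ₀ b₀ σ₀sq : ℝ)
    (hεint : Integrable ε P) (hεmean : ∫ ω, ε ω ∂P = 0)
    (hε'int : Integrable ε' P) (hε'mean : ∫ ω, ε' ω ∂P = 0)
    (hεsq : Integrable (fun ω => ε ω ^ 2) P) (hεvar : ∫ ω, ε ω ^ 2 ∂P = σ₀sq)
    (hε'sq : Integrable (fun ω => ε' ω ^ 2) P) (hε'var : ∫ ω, ε' ω ^ 2 ∂P = σ₀sq)
    (hσ : 0 < σ₀sq) (hb : b₀ ≠ 0) :
    (P[(fun ω => ((μ₀ + φ₀ * Y ω + b₀ * Y ω * ε' ω + ε ω) - μ₀ - φ₀ * Y ω) /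
        (σ₀sq * (1 + b₀ ^ 2 * Y ω ^ 2)))|G] =ᵐ[P] fun _ => 0) ∧
    (P[(fun ω => Y ω * ((μ₀ + φ₀ * Y ω + b₀ * Y ω * ε' ω + ε ω) - μ₀ - φ₀ * Y ω) /
        (σ₀sq * (1 + b₀ ^ 2 * Y ω ^ 2)))|G] =ᵐ[P] fun _ => 0) ∧
    (P[(fun ω => 1 - ((μ₀ + φ₀ * Y ω + b₀ * Y ω * ε' ω + ε ω) - μ₀ - φ₀ * Y ω) ^ 2 /
        (σ₀sq * (1 + b₀ ^ 2 * Y ω ^ 2)))|G] =ᵐ[P] fun _ => 0) ∧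
    (P[(fun ω => (Y ω ^ 2 / (1 + b₀ ^ 2 * Y ω ^ 2)) *
        (1 - ((μ₀ + φ₀ * Y ω + b₀ * Y ω * ε' ω + ε ω) - μ₀ - φ₀ * Y ω) ^ 2 /
          (σ₀sq * (1 + b₀ ^ 2 * Y ω ^ 2))))|G] =ᵐ[P] fun _ => 0) := by
  classical
  let m' : MeasurableSpace Ω := MeasurableSpace.comap (fun ω => (ε ω, ε' ω)) inferInstance
  have hindepG' : Indep m' G P := hindepG
  have hεΩ : Measurable[mΩ] ε := hε
  have hε'Ω : Measurable[mΩ] ε' := hε'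
  have hprod : @Measurable Ω (ℝ × ℝ) mΩ inferInstance (fun ω => (ε ω, ε' ω)) :=
    hεΩ.prodMk hε'Ω
  have hm' : m' ≤ mΩ := measurable_iff_comap_le.mp hprod
  have hWm' : @Measurable Ω (ℝ × ℝ) m' inferInstance (fun ω => (ε ω, ε' ω)) :=
    measurable_iff_comap_le.mpr le_rfl
  have hεm' : Measurable[m'] ε := measurable_fst.comp hWm'
  have hε'm' : Measurable[m'] ε' := measurable_snd.comp hWm'
  have hεsqm' : Measurable[m'] (fun ω => ε ω ^ 2) := hεm'.pow_const 2
  have hε'sqm' : Measurable[m'] (fun ω => ε' ω ^ 2) := hε'm'.pow_const 2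
  have hcrossm' : Measurable[m'] (fun ω => ε ω * ε' ω) := hεm'.mul hε'm'
  have hcrossint : Integrable (fun ω => ε ω * ε' ω) P := hindep.integrable_mul hεint hε'int
  have hεaesm : @AEStronglyMeasurable Ω ℝ _ mΩ mΩ ε P := hεΩ.aestronglyMeasurable
  have hε'aesm : @AEStronglyMeasurable Ω ℝ _ mΩ mΩ ε' P := hε'Ω.aestronglyMeasurable
  have hcrossmean : ∫ ω, ε ω * ε' ω ∂P = 0 := by
    rw [show (fun ω => ε ω * ε' ω) = ε * ε' from rfl, hindep.integral_mul_eq_mul_integral hεaesm hε'aesm, hεmean, hε'mean]; ring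
  have honeint : Integrable (fun _ : Ω => (1:ℝ)) P := integrable_const 1
  have honemean : ∫ _ : Ω, (1:ℝ) ∂P = 1 := by simp
  have honem' : Measurable[m'] (fun _ : Ω => (1:ℝ)) := measurable_const
  have hu : ∀ ω, (0:ℝ) < 1 + b₀ ^ 2 * Y ω ^ 2 := fun ω => by positivity
  have hD : ∀ ω, (0:ℝ) < σ₀sq * (1 + b₀ ^ 2 * Y ω ^ 2) := fun ω => mul_pos hσ (hu ω)
  have hb2 : (0:ℝ) < b₀ ^ 2 :=
    lt_of_le_of_ne (sq_nonneg b₀) (Ne.symm (pow_ne_zero 2 hb))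
  have hσu : ∀ ω, (0:ℝ) ≤ σ₀sq * (b₀ ^ 2 * Y ω ^ 2) := fun ω =>
    mul_nonneg hσ.le (mul_nonneg (sq_nonneg _) (sq_nonneg _))
  -- the key lemma: conditional expectation of a bounded G-measurable factor times
  -- an (ε,ε')-measurable integrable factor
  have key : ∀ (a h : Ω → ℝ) (C c : ℝ), Measurable[G] a → (∀ ω, |a ω| ≤ C) →
      Measurable[m'] h → Integrable h P → (∫ x, h x ∂P) = c →
      Integrable (fun ω => a ω * h ω) P ∧
        (P[fun ω => a ω * h ω|G] =ᵐ[P] fun ω => a ω * c) := by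
    intro a h C c ha haC hhm hhint hc
    have haΩ : Measurable[mΩ] a := ha.mono hG le_rfl
    have haesm : @AEStronglyMeasurable Ω ℝ _ mΩ mΩ a P := haΩ.aestronglyMeasurable
    have hint : Integrable (fun ω => a ω * h ω) P :=
      hhint.bdd_mul (c := C) haesm (Filter.Eventually.of_forall fun ω => by simpa [Real.norm_eq_abs] using haC ω)
    refine ⟨hint, ?_⟩
    have h1 := condExp_mul_of_stronglyMeasurable_left (μ := P) ha.stronglyMeasurable hint hhint
    have h2 : P[h|G] =ᵐ[P] fun _ => c := by
      have h3 := condExp_indep_eq (μ := P) hm' hG hhm.stronglyMeasurable hindepG'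
      have h4 : P[h] = c := hc
      rw [h4] at h3
      exact h3
    refine h1.trans ?_
    filter_upwards [h2] with ω hω
    simp only [Pi.mul_apply, hω]
  have add2 : ∀ (f g f' g' : Ω → ℝ), Integrable f P → Integrable g P →
      P[f|G] =ᵐ[P] f' → P[g|G] =ᵐ[P] g' →
      P[fun ω => f ω + g ω|G] =ᵐ[P] fun ω => f' ω + g' ω := by
    intro f g f' g' hf hg ef eg
    exact (condExp_add hf hg G).trans (ef.add eg)
  -- bounds for the coefficients
  have hamgm : ∀ ω, 2 * |b₀ * Y ω| ≤ 1 + b₀ ^ 2 * Y ω ^ 2 := by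
    intro ω
    nlinarith [sq_nonneg (|b₀ * Y ω| - 1), sq_abs (b₀ * Y ω), sq_nonneg (b₀ * Y ω)]
  have hbsq : ∀ ω, b₀ ^ 2 * Y ω ^ 2 ≤ 1 + b₀ ^ 2 * Y ω ^ 2 := fun ω => by linarith
  -- measurability of coefficient functions (all built from Y)
  have hmeasD : Measurable[G] (fun ω => σ₀sq * (1 + b₀ ^ 2 * Y ω ^ 2)) :=
    measurable_const.mul ((measurable_const.mul (hY.pow_const 2)).const_add 1)
  ------------------------------------------------------------------
  -- Component 1
  ------------------------------------------------------------------
  have comp1 : P[(fun ω => ((μ₀ + φ₀ * Y ω + b₀ * Y ω * ε' ω + ε ω) - μ₀ - φ₀ * Y ω) /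
        (σ₀sq * (1 + b₀ ^ 2 * Y ω ^ 2)))|G] =ᵐ[P] fun _ => 0 := by
    have hb1 : ∀ ω, |1 / (σ₀sq * (1 + b₀ ^ 2 * Y ω ^ 2))| ≤ 1 / σ₀sq := by
      intro ω
      rw [abs_div, abs_of_pos (hD ω), abs_one, div_le_div_iff₀ (hD ω) hσ]
      nlinarith [hσu ω]
    have hb2' : ∀ ω, |b₀ * Y ω / (σ₀sq * (1 + b₀ ^ 2 * Y ω ^ 2))| ≤ 1 / (2 * σ₀sq) := by
      intro ω
      rw [abs_div, abs_of_pos (hD ω), div_le_div_iff₀ (hD ω) (by positivity)]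
      nlinarith [mul_le_mul_of_nonneg_left (hamgm ω) hσ.le]
    obtain ⟨i1, e1⟩ := key (fun ω => 1 / (σ₀sq * (1 + b₀ ^ 2 * Y ω ^ 2))) ε (1 / σ₀sq) 0
      (measurable_const.div hmeasD) hb1 hεm' hεint hεmean
    obtain ⟨i2, e2⟩ := key (fun ω => b₀ * Y ω / (σ₀sq * (1 + b₀ ^ 2 * Y ω ^ 2))) ε'
      (1 / (2 * σ₀sq)) 0 ((measurable_const.mul hY).div hmeasD) hb2' hε'm' hε'int hε'mean
    have hf : (fun ω => ((μ₀ + φ₀ * Y ω + b₀ * Y ω * ε' ω + ε ω) - μ₀ - φ₀ * Y ω) /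
        (σ₀sq * (1 + b₀ ^ 2 * Y ω ^ 2)))
        = fun ω => (1 / (σ₀sq * (1 + b₀ ^ 2 * Y ω ^ 2))) * ε ω
          + (b₀ * Y ω / (σ₀sq * (1 + b₀ ^ 2 * Y ω ^ 2))) * ε' ω := by
      funext ω; ring
    rw [hf]
    refine (add2 _ _ _ _ i1 i2 e1 e2).trans ?_
    refine Filter.Eventually.of_forall fun ω => ?_
    simp only [mul_zero, add_zero]
  ------------------------------------------------------------------
  -- Component 2
  ------------------------------------------------------------------
  have comp2 : P[(fun ω => Y ω * ((μ₀ + φ₀ * Y ω + b₀ * Y ω * ε' ω + ε ω) - μ₀ - φ₀ * Y ω) /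
        (σ₀sq * (1 + b₀ ^ 2 * Y ω ^ 2)))|G] =ᵐ[P] fun _ => 0 := by
    have hbpos : (0:ℝ) < |b₀| := abs_pos.mpr hb
    have hb1 : ∀ ω, |Y ω / (σ₀sq * (1 + b₀ ^ 2 * Y ω ^ 2))| ≤ 1 / (2 * |b₀| * σ₀sq) := by
      intro ω
      rw [abs_div, abs_of_pos (hD ω), div_le_div_iff₀ (hD ω) (by positivity)]
      have h1 : |b₀| * |Y ω| = |b₀ * Y ω| := (abs_mul b₀ (Y ω)).symm
      nlinarith [mul_le_mul_of_nonneg_left (hamgm ω) hσ.le, abs_nonneg (Y ω)]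
    have hb2' : ∀ ω, |b₀ * Y ω ^ 2 / (σ₀sq * (1 + b₀ ^ 2 * Y ω ^ 2))| ≤ 1 / (|b₀| * σ₀sq) := by
      intro ω
      rw [abs_div, abs_of_pos (hD ω), div_le_div_iff₀ (hD ω) (by positivity)]
      have h1 : |b₀ * Y ω ^ 2| = |b₀| * Y ω ^ 2 := by
        rw [abs_mul, abs_of_nonneg (sq_nonneg (Y ω))]
      have h3 : |b₀| * Y ω ^ 2 * (|b₀| * σ₀sq) = σ₀sq * (b₀ ^ 2 * Y ω ^ 2) := by
        rw [← sq_abs b₀]; ring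
      rw [h1, h3]
      nlinarith [mul_le_mul_of_nonneg_left (hbsq ω) hσ.le]
    obtain ⟨i1, e1⟩ := key (fun ω => Y ω / (σ₀sq * (1 + b₀ ^ 2 * Y ω ^ 2))) ε
      (1 / (2 * |b₀| * σ₀sq)) 0 (hY.div hmeasD) hb1 hεm' hεint hεmean
    obtain ⟨i2, e2⟩ := key (fun ω => b₀ * Y ω ^ 2 / (σ₀sq * (1 + b₀ ^ 2 * Y ω ^ 2))) ε'
      (1 / (|b₀| * σ₀sq)) 0 ((measurable_const.mul (hY.pow_const 2)).div hmeasD) hb2'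
      hε'm' hε'int hε'mean
    have hf : (fun ω => Y ω * ((μ₀ + φ₀ * Y ω + b₀ * Y ω * ε' ω + ε ω) - μ₀ - φ₀ * Y ω) /
        (σ₀sq * (1 + b₀ ^ 2 * Y ω ^ 2)))
        = fun ω => (Y ω / (σ₀sq * (1 + b₀ ^ 2 * Y ω ^ 2))) * ε ω
          + (b₀ * Y ω ^ 2 / (σ₀sq * (1 + b₀ ^ 2 * Y ω ^ 2))) * ε' ω := by
      funext ω; ring
    rw [hf]
    refine (add2 _ _ _ _ i1 i2 e1 e2).trans ?_
    refine Filter.Eventually.of_forall fun ω => ?_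
    simp only [mul_zero, add_zero]
  ------------------------------------------------------------------
  -- Component 3
  ------------------------------------------------------------------
  have hbA : ∀ ω, |-(1 / (σ₀sq * (1 + b₀ ^ 2 * Y ω ^ 2)))| ≤ 1 / σ₀sq := by
    intro ω
    rw [abs_neg, abs_div, abs_of_pos (hD ω), abs_one, div_le_div_iff₀ (hD ω) hσ]
    nlinarith [hσu ω]
  have hbB : ∀ ω, |-(2 * b₀ * Y ω / (σ₀sq * (1 + b₀ ^ 2 * Y ω ^ 2)))| ≤ 1 / σ₀sq := by
    intro ω
    rw [abs_neg, abs_div, abs_of_pos (hD ω), div_le_div_iff₀ (hD ω) hσ]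
    have h1 : |2 * b₀ * Y ω| = 2 * |b₀ * Y ω| := by
      rw [show 2 * b₀ * Y ω = 2 * (b₀ * Y ω) by ring, abs_mul, abs_two]
    rw [h1]
    nlinarith [mul_le_mul_of_nonneg_left (hamgm ω) hσ.le]
  have hbC : ∀ ω, |-(b₀ ^ 2 * Y ω ^ 2 / (σ₀sq * (1 + b₀ ^ 2 * Y ω ^ 2)))| ≤ 1 / σ₀sq := by
    intro ω
    rw [abs_neg, abs_div, abs_of_pos (hD ω), div_le_div_iff₀ (hD ω) hσ]
    have h1 : |b₀ ^ 2 * Y ω ^ 2| = b₀ ^ 2 * Y ω ^ 2 := abs_of_nonneg (by positivity)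
    rw [h1]
    nlinarith [mul_le_mul_of_nonneg_left (hbsq ω) hσ.le]
  have hmA : Measurable[G] (fun ω => -(1 / (σ₀sq * (1 + b₀ ^ 2 * Y ω ^ 2)))) :=
    (measurable_const.div hmeasD).neg
  have hmB : Measurable[G] (fun ω => -(2 * b₀ * Y ω / (σ₀sq * (1 + b₀ ^ 2 * Y ω ^ 2)))) :=
    ((measurable_const.mul hY).div hmeasD).neg
  have hmC : Measurable[G] (fun ω => -(b₀ ^ 2 * Y ω ^ 2 / (σ₀sq * (1 + b₀ ^ 2 * Y ω ^ 2)))) :=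
    ((measurable_const.mul (hY.pow_const 2)).div hmeasD).neg
  have comp3 : P[(fun ω => 1 - ((μ₀ + φ₀ * Y ω + b₀ * Y ω * ε' ω + ε ω) - μ₀ - φ₀ * Y ω) ^ 2 /
        (σ₀sq * (1 + b₀ ^ 2 * Y ω ^ 2)))|G] =ᵐ[P] fun _ => 0 := by
    obtain ⟨i0, e0⟩ := key (fun _ => (1:ℝ)) (fun _ => (1:ℝ)) 1 1 measurable_const
      (fun ω => by simp) honem' honeint honemean
    obtain ⟨i1, e1⟩ := key (fun ω => -(1 / (σ₀sq * (1 + b₀ ^ 2 * Y ω ^ 2))))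
      (fun ω => ε ω ^ 2) (1 / σ₀sq) σ₀sq hmA hbA hεsqm' hεsq hεvar
    obtain ⟨i2, e2⟩ := key (fun ω => -(2 * b₀ * Y ω / (σ₀sq * (1 + b₀ ^ 2 * Y ω ^ 2))))
      (fun ω => ε ω * ε' ω) (1 / σ₀sq) 0 hmB hbB hcrossm' hcrossint hcrossmean
    obtain ⟨i3, e3⟩ := key (fun ω => -(b₀ ^ 2 * Y ω ^ 2 / (σ₀sq * (1 + b₀ ^ 2 * Y ω ^ 2))))
      (fun ω => ε' ω ^ 2) (1 / σ₀sq) σ₀sq hmC hbC hε'sqm' hε'sq hε'var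
    have hf : (fun ω => 1 - ((μ₀ + φ₀ * Y ω + b₀ * Y ω * ε' ω + ε ω) - μ₀ - φ₀ * Y ω) ^ 2 /
        (σ₀sq * (1 + b₀ ^ 2 * Y ω ^ 2)))
        = fun ω => ((1:ℝ) * (1:ℝ)
            + (-(1 / (σ₀sq * (1 + b₀ ^ 2 * Y ω ^ 2))) * ε ω ^ 2
            + (-(2 * b₀ * Y ω / (σ₀sq * (1 + b₀ ^ 2 * Y ω ^ 2))) * (ε ω * ε' ω)
            + -(b₀ ^ 2 * Y ω ^ 2 / (σ₀sq * (1 + b₀ ^ 2 * Y ω ^ 2))) * ε' ω ^ 2))) := by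
      funext ω; ring
    rw [hf]
    have E := add2 _ _ _ _ i0 (i1.add (i2.add i3)) e0
      (add2 _ _ _ _ i1 (i2.add i3) e1 (add2 _ _ _ _ i2 i3 e2 e3))
    refine E.trans ?_
    refine Filter.Eventually.of_forall fun ω => ?_
    have h1 := (hu ω).ne'
    have h2 := hσ.ne'
    field_simp
    ring
  ------------------------------------------------------------------
  -- Component 4
  ------------------------------------------------------------------
  have comp4 : P[(fun ω => (Y ω ^ 2 / (1 + b₀ ^ 2 * Y ω ^ 2)) *
        (1 - ((μ₀ + φ₀ * Y ω + b₀ * Y ω * ε' ω + ε ω) - μ₀ - φ₀ * Y ω) ^ 2 /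
          (σ₀sq * (1 + b₀ ^ 2 * Y ω ^ 2))))|G] =ᵐ[P] fun _ => 0 := by
    have hE : ∀ ω, |Y ω ^ 2 / (1 + b₀ ^ 2 * Y ω ^ 2)| ≤ 1 / b₀ ^ 2 := by
      intro ω
      rw [abs_div, abs_of_pos (hu ω), div_le_div_iff₀ (hu ω) hb2]
      have h1 : |Y ω ^ 2| = Y ω ^ 2 := abs_of_nonneg (sq_nonneg _)
      rw [h1]; nlinarith
    have hmE : Measurable[G] (fun ω => Y ω ^ 2 / (1 + b₀ ^ 2 * Y ω ^ 2)) :=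
      (hY.pow_const 2).div ((measurable_const.mul (hY.pow_const 2)).const_add 1)
    have hEnn : (0:ℝ) ≤ 1 / b₀ ^ 2 := by positivity
    obtain ⟨i0, e0⟩ := key (fun ω => Y ω ^ 2 / (1 + b₀ ^ 2 * Y ω ^ 2)) (fun _ => (1:ℝ))
      (1 / b₀ ^ 2) 1 hmE hE honem' honeint honemean
    obtain ⟨i1, e1⟩ := key
      (fun ω => Y ω ^ 2 / (1 + b₀ ^ 2 * Y ω ^ 2) * -(1 / (σ₀sq * (1 + b₀ ^ 2 * Y ω ^ 2))))
      (fun ω => ε ω ^ 2) (1 / b₀ ^ 2 * (1 / σ₀sq)) σ₀sq (hmE.mul hmA)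
      (fun ω => by rw [abs_mul]; exact mul_le_mul (hE ω) (hbA ω) (abs_nonneg _) hEnn)
      hεsqm' hεsq hεvar
    obtain ⟨i2, e2⟩ := key
      (fun ω => Y ω ^ 2 / (1 + b₀ ^ 2 * Y ω ^ 2) *
        -(2 * b₀ * Y ω / (σ₀sq * (1 + b₀ ^ 2 * Y ω ^ 2))))
      (fun ω => ε ω * ε' ω) (1 / b₀ ^ 2 * (1 / σ₀sq)) 0 (hmE.mul hmB)
      (fun ω => by rw [abs_mul]; exact mul_le_mul (hE ω) (hbB ω) (abs_nonneg _) hEnn)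
      hcrossm' hcrossint hcrossmean
    obtain ⟨i3, e3⟩ := key
      (fun ω => Y ω ^ 2 / (1 + b₀ ^ 2 * Y ω ^ 2) *
        -(b₀ ^ 2 * Y ω ^ 2 / (σ₀sq * (1 + b₀ ^ 2 * Y ω ^ 2))))
      (fun ω => ε' ω ^ 2) (1 / b₀ ^ 2 * (1 / σ₀sq)) σ₀sq (hmE.mul hmC)
      (fun ω => by rw [abs_mul]; exact mul_le_mul (hE ω) (hbC ω) (abs_nonneg _) hEnn)
      hε'sqm' hε'sq hε'var
    have hf : (fun ω => (Y ω ^ 2 / (1 + b₀ ^ 2 * Y ω ^ 2)) *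
        (1 - ((μ₀ + φ₀ * Y ω + b₀ * Y ω * ε' ω + ε ω) - μ₀ - φ₀ * Y ω) ^ 2 /
          (σ₀sq * (1 + b₀ ^ 2 * Y ω ^ 2))))
        = fun ω => (Y ω ^ 2 / (1 + b₀ ^ 2 * Y ω ^ 2)) * (1:ℝ)
            + ((Y ω ^ 2 / (1 + b₀ ^ 2 * Y ω ^ 2) *
                -(1 / (σ₀sq * (1 + b₀ ^ 2 * Y ω ^ 2)))) * ε ω ^ 2
            + ((Y ω ^ 2 / (1 + b₀ ^ 2 * Y ω ^ 2) *
                -(2 * b₀ * Y ω / (σ₀sq * (1 + b₀ ^ 2 * Y ω ^ 2)))) * (ε ω * ε' ω)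
            + (Y ω ^ 2 / (1 + b₀ ^ 2 * Y ω ^ 2) *
                -(b₀ ^ 2 * Y ω ^ 2 / (σ₀sq * (1 + b₀ ^ 2 * Y ω ^ 2)))) * ε' ω ^ 2)) := by
      funext ω; ring
    rw [hf]
    have E := add2 _ _ _ _ i0 (i1.add (i2.add i3)) e0
      (add2 _ _ _ _ i1 (i2.add i3) e1 (add2 _ _ _ _ i2 i3 e2 e3))
    refine E.trans ?_
    refine Filter.Eventually.of_forall fun ω => ?_
    have h1 := (hu ω).ne'
    have h2 := hσ.ne'
    field_simp
    ring
  exact ⟨comp1, comp2, comp3, comp4⟩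
end
end
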